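/- arXiv:2502.04280 — 4 statements merged into one kernel-verified Lean document; each statement's English description precedes it below -/
import Mathlib

section
/- Uniformly integrable empirical integrals converge (Corollary A.1 / unifintflem): Let 𝒳 be a locally compact Polish space and {Y^n_i : n ∈ ℕ, 1 ≤ i ≤ n} a triangular array of 𝒳-valued random elements on a common probability space such that the empirical measures η^n_Y := (1/n)Σ_{i=1}^n δ_{Y^n_i} converge in probability in 𝒫(𝒳) to a (possibly random) probability measure η_Y. Let f : 𝒳 → ℝ^d be continuous with {f(Y^n_i) : n ∈ ℕ, 1 ≤ i ≤ n} uniformly integrable. Then (1/n)Σ_{i=1}^n f(Y^n_i) converges in probability to ∫_𝒳 f(y) dη_Y(y). -/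
open MeasureTheory ProbabilityTheory Filter

noncomputable section

namespace CoevolveNet

/-- A real-valued function is bounded. -/
def IsBdd {α : Type*} (f : α → ℝ) : Prop := ∃ C, ∀ x, |f x| ≤ C

/-- Convergence in distribution of random elements (possibly defined on different
probability spaces), phrased via bounded continuous test functions. -/
def TendstoInDist {Ω Ω' E : Type*} [MeasurableSpace Ω] [MeasurableSpace Ω']
    [TopologicalSpace E] (P : Measure Ω) (Q : Measure Ω')
    (X : ℕ → Ω → E) (Y : Ω' → E) : Prop :=
  ∀ f : BoundedContinuousFunction E ℝ,
    Tendsto (fun n => ∫ ω, f (X n ω) ∂P) atTop (nhds (∫ ω, f (Y ω) ∂Q))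

/-- Mutual conditional independence of a finite family of random elements given a
sub-σ-algebra `m`: conditional expectations of products of bounded measurable
functions factorize. -/
def iCondIndepGiven {Ω : Type*} {mΩ : MeasurableSpace Ω} (P : Measure Ω) (m : MeasurableSpace Ω)
    {ι : Type*} [Fintype ι] {E : ι → Type*} [∀ i, MeasurableSpace (E i)]
    (W : ∀ i, Ω → E i) : Prop :=
  ∀ f : ∀ i, E i → ℝ, (∀ i, Measurable (f i)) → (∀ i, IsBdd (f i)) →
    P[(fun ω => ∏ i, f i (W i ω)) | m]
      =ᵐ[P] fun ω => ∏ i, (P[(fun ω' => f i (W i ω')) | m]) ω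

/-- Conditional independence of two random elements given a sub-σ-algebra. -/
def CondIndepPair {Ω : Type*} {mΩ : MeasurableSpace Ω} (P : Measure Ω) (m : MeasurableSpace Ω)
    {E F : Type*} [MeasurableSpace E] [MeasurableSpace F] (U : Ω → E) (V : Ω → F) : Prop :=
  ∀ (f : E → ℝ) (g : F → ℝ), Measurable f → Measurable g → IsBdd f → IsBdd g →
    P[(fun ω => f (U ω) * g (V ω)) | m]
      =ᵐ[P] fun ω => (P[(fun ω' => f (U ω')) | m]) ω * (P[(fun ω' => g (V ω')) | m]) ω

/-- Conditional independence of two sub-σ-algebras given a third. -/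
def CondIndepSigma {Ω : Type*} {mΩ : MeasurableSpace Ω} (P : Measure Ω)
    (m F1 F2 : MeasurableSpace Ω) : Prop :=
  ∀ f g : Ω → ℝ, Measurable[F1] f → Measurable[F2] g → IsBdd f → IsBdd g →
    P[(fun ω => f ω * g ω) | m] =ᵐ[P] fun ω => (P[f | m]) ω * (P[g | m]) ω

/-- `η` is a (σ(X)-measurable) version of the conditional law of `W` given `X`. -/
def IsCondLaw {Ω 𝒳 E : Type*} {mΩ : MeasurableSpace Ω} [MeasurableSpace 𝒳] [MeasurableSpace E]
    (P : Measure Ω) (X : Ω → 𝒳) (W : Ω → E) (η : Ω → ProbabilityMeasure E) : Prop :=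
  Measurable[MeasurableSpace.comap X inferInstance] (fun ω => (η ω : Measure E)) ∧
  ∀ s : Set E, MeasurableSet s →
    P[(fun ω => Set.indicator s (fun _ => (1 : ℝ)) (W ω)) | MeasurableSpace.comap X inferInstance]
      =ᵐ[P] fun ω => ((η ω : Measure E) s).toReal

/-- `φ` is continuous at `µ`-almost every point. -/
def AEContinuous {α β : Type*} [TopologicalSpace α] [TopologicalSpace β] [MeasurableSpace α]
    (μ : Measure α) (φ : α → β) : Prop := ∀ᵐ x ∂μ, ContinuousAt φ x

/-- `W` depends continuously on `X`: `W = φ(X)` a.s. for some `Law(X)`-a.e. continuous `φ`. -/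
def DepContinuously {Ω 𝒳 β : Type*} [MeasurableSpace Ω] [MeasurableSpace 𝒳]
    [TopologicalSpace 𝒳] [TopologicalSpace β] (P : Measure Ω) (X : Ω → 𝒳) (W : Ω → β) : Prop :=
  ∃ φ : 𝒳 → β, AEContinuous (P.map X) φ ∧ ∀ᵐ ω ∂P, φ (X ω) = W ω

/-- The empirical measure `(1/n) ∑_{j<n} δ_{x j}`. -/
def empMeasure {E : Type*} [MeasurableSpace E] (n : ℕ) (x : ℕ → E) : Measure E :=
  (n : ENNReal)⁻¹ • ∑ j ∈ Finset.range n, Measure.dirac (x j)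

lemma isProbabilityMeasure_empMeasure {E : Type*} [MeasurableSpace E] {n : ℕ} (hn : n ≠ 0)
    (x : ℕ → E) : IsProbabilityMeasure (empMeasure n x) := by
  constructor
  rw [empMeasure, Measure.smul_apply, Measure.finset_sum_apply]
  simp only [measure_univ, Finset.sum_const, Finset.card_range, nsmul_eq_mul, mul_one,
    smul_eq_mul]
  exact ENNReal.inv_mul_cancel (by exact_mod_cast hn) (by simp)

/-- The empirical measure as a probability measure (junk value `δ_{x 0}` if `n = 0`). -/
def empProb {E : Type*} [MeasurableSpace E] (n : ℕ) (x : ℕ → E) : ProbabilityMeasure E :=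
  if h : n = 0 then ⟨Measure.dirac (x 0), inferInstance⟩
  else ⟨empMeasure n x, isProbabilityMeasure_empMeasure h x⟩

/-- Uniform distribution on a finite set. -/
def unifOn {α : Type*} [MeasurableSpace α] (S : Finset α) : Measure α :=
  (S.card : ENNReal)⁻¹ • ∑ x ∈ S, Measure.dirac x

/-- `(X,(Y_i)_{i<m})` is exchangeable excluding the first index: permutations of the
indices fixing `0` do not change the joint law. -/
def ExchExclZero {Ω 𝒳 𝒴 : Type*} [MeasurableSpace Ω] [MeasurableSpace 𝒳] [MeasurableSpace 𝒴]
    (P : Measure Ω) {m : ℕ} (X : Ω → 𝒳) (Y : Fin m → Ω → 𝒴) : Prop :=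
  ∀ σ : Equiv.Perm (Fin m), (∀ h0 : 0 < m, σ ⟨0, h0⟩ = ⟨0, h0⟩) →
    P.map (fun ω => (X ω, fun i => Y (σ i) ω)) = P.map (fun ω => (X ω, fun i => Y i ω))

/-- Joint exchangeability of a vector and a matrix of random elements. -/
def JointlyExch {Ω 𝒳 𝒴 : Type*} [MeasurableSpace Ω] [MeasurableSpace 𝒳] [MeasurableSpace 𝒴]
    (P : Measure Ω) {n : ℕ} (X : Fin n → Ω → 𝒳) (M : Fin n → Fin n → Ω → 𝒴) : Prop :=
  ∀ σ : Equiv.Perm (Fin n),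
    P.map (fun ω => (fun i => X (σ i) ω, fun i j => M (σ i) (σ j) ω))
      = P.map (fun ω => (fun i => X i ω, fun i j => M i j ω))

/-- Convergence in probability of random (finite) measures, with respect to the
Lévy–Prokhorov distance (which metrizes the weak topology on probability measures
over a separable metric space). -/
def TendstoInProbLP {Ω X : Type*} [MeasurableSpace Ω] [MeasurableSpace X] [PseudoEMetricSpace X]
    (P : Measure Ω) (η : ℕ → Ω → Measure X) (ηlim : Ω → Measure X) : Prop :=
  ∀ ε : ℝ, 0 < ε →
    Tendsto (fun n => P {ω | ε ≤ levyProkhorovDist (η n ω) (ηlim ω)}) atTop (nhds 0)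

end CoevolveNet


section Helpers
open CoevolveNet MeasureTheory Filter
open scoped ENNReal

lemma lintegral_empMeasure {E : Type*} [MeasurableSpace E] [MeasurableSingletonClass E]
    (n : ℕ) (x : ℕ → E) (q : E → ℝ≥0∞) :
    ∫⁻ y, q y ∂(empMeasure n x) = (n : ℝ≥0∞)⁻¹ * ∑ i ∈ Finset.range n, q (x i) := by
  rw [empMeasure, lintegral_smul_measure, lintegral_finset_sum_measure]
  simp [lintegral_dirac]

lemma integral_empMeasure {E G : Type*} [MeasurableSpace E] [MeasurableSingletonClass E]
    [NormedAddCommGroup G] [NormedSpace ℝ G] [CompleteSpace G] (n : ℕ) (x : ℕ → E) (g : E → G) :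
    ∫ y, g y ∂(empMeasure n x) = (n : ℝ)⁻¹ • ∑ i ∈ Finset.range n, g (x i) := by
  have hint : ∀ j ∈ Finset.range n, Integrable g (Measure.dirac (x j)) := by
    intro j _
    refine (integrable_const (g (x j))).congr ?_
    rw [ae_dirac_eq]
    exact Filter.eventually_pure.2 rfl
  rw [empMeasure, integral_smul_measure, integral_finset_sum_measure hint]
  simp [integral_dirac]

lemma lp_tendsto_integral {𝒳 : Type*} [MeasurableSpace 𝒳] [PseudoMetricSpace 𝒳]
    [OpensMeasurableSpace 𝒳] {μs : ℕ → Measure 𝒳} {ν : Measure 𝒳} [hν : IsProbabilityMeasure ν]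
    (hp : ∀ᶠ k in atTop, IsProbabilityMeasure (μs k))
    (h : Tendsto (fun k => levyProkhorovDist (μs k) ν) atTop (nhds 0))
    (g : BoundedContinuousFunction 𝒳 ℝ) :
    Tendsto (fun k => ∫ x, g x ∂(μs k)) atTop (nhds (∫ x, g x ∂ν)) := by
  obtain ⟨K, hK⟩ := eventually_atTop.mp hp
  set μ' : ℕ → Measure 𝒳 := fun k => if K ≤ k then μs k else ν with hμ'
  have hprob : ∀ k, IsProbabilityMeasure (μ' k) := by
    intro k; by_cases hk : K ≤ k
    · simpa [μ', hk] using hK k hk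
    · simpa [μ', hk] using hν
  have h' : Tendsto (fun k => levyProkhorovDist (μ' k) ν) atTop (nhds 0) := by
    refine Tendsto.congr' ?_ h
    filter_upwards [eventually_ge_atTop K] with k hk
    simp [μ', hk]
  set p : ℕ → LevyProkhorov (ProbabilityMeasure 𝒳) :=
    fun k => (LevyProkhorov.toMeasureEquiv (α := ProbabilityMeasure 𝒳)).symm ⟨μ' k, hprob k⟩ with hp'
  set q : LevyProkhorov (ProbabilityMeasure 𝒳) :=
    (LevyProkhorov.toMeasureEquiv (α := ProbabilityMeasure 𝒳)).symm ⟨ν, hν⟩ with hq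
  have htend : Tendsto p atTop (nhds q) := by
    rw [tendsto_iff_dist_tendsto_zero]
    exact h'
  have hcont := (LevyProkhorov.continuous_toMeasure_probabilityMeasure (Ω := 𝒳)).tendsto q
  have h2 := ProbabilityMeasure.tendsto_iff_forall_integral_tendsto.mp (hcont.comp htend) g
  refine Tendsto.congr' ?_ h2
  filter_upwards [eventually_ge_atTop K] with k hk
  simp only [Function.comp]
  congr 1
  show μ' k = μs k
  simp [μ', hk]


lemma isFiniteMeasure_empMeasure {E : Type*} [MeasurableSpace E] (n : ℕ) (x : ℕ → E) :
    IsFiniteMeasure (empMeasure n x) := by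
  constructor
  rw [empMeasure, Measure.smul_apply, Measure.finset_sum_apply]
  simp only [measure_univ, Finset.sum_const, Finset.card_range, nsmul_eq_mul, mul_one, smul_eq_mul]
  rcases Nat.eq_zero_or_pos n with h | h
  · simp [h]
  · rw [ENNReal.inv_mul_cancel (by exact_mod_cast h.ne') (by simp)]
    exact ENNReal.one_lt_top

end Helpers

open CoevolveNet MeasureTheory ProbabilityTheory Filter
open scoped ENNReal NNReal

set_option maxHeartbeats 2000000

/-- **Uniformly integrable empirical integrals converge** (Corollary A.1).  Let `𝒳`
be a locally compact Polish space and `{Y^n_i : i < n}` a triangular array of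
`𝒳`-valued random elements whose empirical measures converge in probability (weak
topology, metrized by the Lévy–Prokhorov distance) to a possibly random probability
measure `η_Y`.  If `f : 𝒳 → ℝ^d` is continuous with `{f(Y^n_i)}` uniformly
integrable, then `(1/n) ∑_{i<n} f(Y^n_i)` converges in probability to `∫ f dη_Y`. -/
theorem empirical_integral_tendstoInProb
    {Ω 𝒳 : Type*} [MeasurableSpace Ω]
    [MetricSpace 𝒳] [TopologicalSpace.SeparableSpace 𝒳] [CompleteSpace 𝒳]
    [LocallyCompactSpace 𝒳] [MeasurableSpace 𝒳] [BorelSpace 𝒳]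
    (P : Measure Ω) [IsProbabilityMeasure P]
    (d : ℕ) (Y : ℕ → ℕ → Ω → 𝒳)
    (hmeas : ∀ n i, Measurable (Y n i))
    (f : 𝒳 → (Fin d → ℝ)) (hf : Continuous f)
    (hUI : ∀ ε : ℝ, 0 < ε → ∃ C : ℝ, ∀ n, ∀ i < n,
      ∫⁻ ω in {ω | C < ‖f (Y n i ω)‖}, ENNReal.ofReal ‖f (Y n i ω)‖ ∂P ≤ ENNReal.ofReal ε)
    (ηlim : Ω → Measure 𝒳)
    (hηm : Measurable ηlim) (hηp : ∀ ω, IsProbabilityMeasure (ηlim ω))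
    (hconv : TendstoInProbLP P (fun n ω => empMeasure n fun i => Y n i ω) ηlim) :
    ∀ ε : ℝ, 0 < ε →
      Tendsto (fun n : ℕ =>
          P {ω | ε ≤ ‖(n : ℝ)⁻¹ • (∑ i ∈ Finset.range n, f (Y n i ω)) - ∫ x, f x ∂(ηlim ω)‖})
        atTop (nhds 0) := by
  
  intro ε hε
  have hε3 : (0:ℝ) < ε / 3 := by linarith
  -- LP distance process and subsequence principle
  set D : ℕ → Ω → ℝ := fun n ω => levyProkhorovDist (empMeasure n fun i => Y n i ω) (ηlim ω)
    with hD
  have hDnonneg : ∀ n ω, 0 ≤ D n ω := fun n ω => ENNReal.toReal_nonneg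
  have hDtim : TendstoInMeasure P D atTop (fun _ => (0:ℝ)) := by
    rw [tendstoInMeasure_iff_dist]
    intro δ hδ
    have := hconv δ hδ
    refine this.congr fun n => ?_
    congr 1
    ext ω
    simp [Real.dist_eq, abs_of_nonneg (hDnonneg n ω)]
    exact Iff.rfl
  -- a.e. weak-convergent subsequences
  have hsub : ∀ ns : ℕ → ℕ, Tendsto ns atTop atTop →
      ∃ ms : ℕ → ℕ, StrictMono ms ∧
        ∀ᵐ ω ∂P, ∀ g : BoundedContinuousFunction 𝒳 ℝ,
          Tendsto (fun k => ∫ x, g x ∂(empMeasure (ns (ms k)) fun i => Y (ns (ms k)) i ω))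
            atTop (nhds (∫ x, g x ∂(ηlim ω))) := by
    intro ns hns
    have htim : TendstoInMeasure P (fun k => D (ns k)) atTop (fun _ => (0:ℝ)) :=
      fun δ hδ => (hDtim δ hδ).comp hns
    obtain ⟨ms, hms, hae⟩ := htim.exists_seq_tendsto_ae
    refine ⟨ms, hms, ?_⟩
    filter_upwards [hae] with ω hω g
    have : IsProbabilityMeasure (ηlim ω) := hηp ω
    refine lp_tendsto_integral ?_ hω g
    have h1 : Tendsto (fun k => ns (ms k)) atTop atTop := hns.comp hms.tendsto_atTop
    filter_upwards [h1.eventually_ge_atTop 1] with k hk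
    exact isProbabilityMeasure_empMeasure (by omega) _
  rw [ENNReal.tendsto_nhds_zero]
  intro δ hδ
  -- choose constants
  set r : ℝ := (min δ 1).toReal with hrdef
  have hminne : min δ 1 ≠ ⊤ := (lt_of_le_of_lt (min_le_right _ _) ENNReal.one_lt_top).ne
  have hrpos : 0 < r := ENNReal.toReal_pos (by rw [← pos_iff_ne_zero, lt_min_iff]; exact ⟨hδ, zero_lt_one⟩) hminne
  have hrδ : ENNReal.ofReal r ≤ δ := by
    rw [hrdef, ENNReal.ofReal_toReal hminne]
    exact min_le_left _ _
  set ε' : ℝ := (ε/3) * (r/8) with hε'def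
  have hε'pos : 0 < ε' := mul_pos hε3 (by linarith)
  obtain ⟨C₀, hC₀⟩ := hUI ε' hε'pos
  set C : ℝ := max C₀ 0 with hCdef
  have hC0 : (0:ℝ) ≤ C := le_max_right _ _
  have hC : ∀ n, ∀ i < n,
      ∫⁻ ω in {ω | C < ‖f (Y n i ω)‖}, ENNReal.ofReal ‖f (Y n i ω)‖ ∂P ≤ ENNReal.ofReal ε' := by
    intro n i hi
    refine le_trans (lintegral_mono_set ?_) (hC₀ n i hi)
    intro ω hω
    simp only [Set.mem_setOf_eq] at hω ⊢
    exact lt_of_le_of_lt (le_max_left _ _) hω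
  -- truncation
  set ψ : ℝ → ℝ := fun t => min 1 (max 0 (2*C+1 - t)) with hψdef
  have hψcont : Continuous ψ :=
    continuous_const.min (continuous_const.max (continuous_const.sub continuous_id))
  have hψ0 : ∀ t, 0 ≤ ψ t := fun t => le_min zero_le_one (le_max_left _ _)
  have hψ1 : ∀ t, ψ t ≤ 1 := fun t => min_le_left _ _
  have hψeq1 : ∀ t, t ≤ 2*C → ψ t = 1 := by
    intro t ht
    rw [hψdef]
    exact min_eq_left (le_max_of_le_right (by linarith))
  have hψ2 : ∀ t : ℝ, 0 ≤ t → ψ t * t ≤ 2*C+1 := by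
    intro t ht
    rcases le_or_gt t (2*C+1) with h | h
    · calc ψ t * t ≤ 1 * t := mul_le_mul_of_nonneg_right (hψ1 t) ht
        _ ≤ 2*C+1 := by linarith
    · have h0 : ψ t = 0 := by
        rw [hψdef]
        simp only
        rw [max_eq_left (by linarith), min_eq_right (by linarith)]
      simp only [h0, zero_mul]
      linarith
  set g : 𝒳 → Fin d → ℝ := fun x => ψ (‖f x‖) • f x with hgdef
  have hgcont : Continuous g := (hψcont.comp (hf.norm)).smul hf
  have hgnorm : ∀ x, ‖g x‖ ≤ 2*C+1 := by
    intro x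
    rw [hgdef]
    simp only
    rw [norm_smul, Real.norm_eq_abs, abs_of_nonneg (hψ0 _)]
    exact hψ2 _ (norm_nonneg _)
  have hfgnorm : ∀ x, ‖f x - g x‖ = (1 - ψ (‖f x‖)) * ‖f x‖ := by
    intro x
    have h1 : f x - g x = (1 - ψ (‖f x‖)) • f x := by
      rw [hgdef]; simp only; rw [sub_smul, one_smul]
    rw [h1, norm_smul, Real.norm_eq_abs, abs_of_nonneg (by linarith [hψ1 (‖f x‖)])]
  have hfg : ∀ x, ‖f x - g x‖ ≤ 2 * max 0 (‖f x‖ - C) := by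
    intro x
    rw [hfgnorm x]
    rcases le_or_gt (‖f x‖) (2*C) with h | h
    · rw [hψeq1 _ h]
      simp only [sub_self, zero_mul]
      positivity
    · have h1 : (1 - ψ (‖f x‖)) * ‖f x‖ ≤ ‖f x‖ := by
        nlinarith [hψ0 (‖f x‖), hψ1 (‖f x‖), norm_nonneg (f x)]
      calc (1 - ψ (‖f x‖)) * ‖f x‖ ≤ ‖f x‖ := h1
        _ ≤ 2 * (‖f x‖ - C) := by linarith
        _ ≤ 2 * max 0 (‖f x‖ - C) := by
            have := le_max_right (0:ℝ) (‖f x‖ - C); linarith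
  have hfgtail : ∀ x, ‖f x - g x‖ ≤ (if 2*C < ‖f x‖ then ‖f x‖ else 0) := by
    intro x
    rw [hfgnorm x]
    split_ifs with h
    · nlinarith [hψ0 (‖f x‖), hψ1 (‖f x‖), norm_nonneg (f x)]
    · push_neg at h
      rw [hψeq1 _ h]
      simp
  -- tail functionals
  set q : 𝒳 → ℝ≥0∞ := fun x => ENNReal.ofReal (max 0 (‖f x‖ - C)) with hqdef
  have hqmeas : Measurable q :=
    ENNReal.measurable_ofReal.comp
      (measurable_const.max ((hf.norm).measurable.sub measurable_const))
  set T : Ω → ℝ≥0∞ := fun ω => 2 * ∫⁻ x, q x ∂(ηlim ω) with hTdef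
  have hTmeas : Measurable T := ((Measure.measurable_lintegral hqmeas).comp hηm).const_mul 2
  have hqMb : ∀ M : ℕ, ∀ x : 𝒳, |min (M:ℝ) (max 0 (‖f x‖ - C))| ≤ (M:ℝ) := by
    intro M x
    rw [abs_of_nonneg (le_min (Nat.cast_nonneg M) (le_max_left _ _))]
    exact min_le_left _ _
  set qB : ℕ → BoundedContinuousFunction 𝒳 ℝ := fun M =>
    BoundedContinuousFunction.ofNormedAddCommGroup (fun x => min (M:ℝ) (max 0 (‖f x‖ - C)))
      (continuous_const.min (continuous_const.max ((hf.norm).sub continuous_const))) (M:ℝ)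
      (fun x => by simpa [Real.norm_eq_abs] using hqMb M x) with hqBdef
  set qM : ℕ → 𝒳 → ℝ≥0∞ := fun M x => ENNReal.ofReal (qB M x) with hqMdef
  have hqBval : ∀ M x, qB M x = min (M:ℝ) (max 0 (‖f x‖ - C)) := fun M x => rfl
  have hqB0 : ∀ M x, 0 ≤ qB M x := fun M x => le_min (Nat.cast_nonneg M) (le_max_left _ _)
  have hqMmeas : ∀ M, Measurable (qM M) := fun M =>
    ENNReal.measurable_ofReal.comp (qB M).continuous.measurable
  have hqMmono : ∀ x, Monotone fun M : ℕ => qM M x := by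
    intro x a b hab
    apply ENNReal.ofReal_le_ofReal
    rw [hqBval, hqBval]
    exact min_le_min (by exact_mod_cast hab) le_rfl
  have hsupq : ∀ x, (⨆ M : ℕ, qM M x) = q x := by
    intro x
    refine le_antisymm (iSup_le fun M =>
      ENNReal.ofReal_le_ofReal (by rw [hqBval]; exact min_le_right _ _)) ?_
    have h1 : q x = qM ⌈max 0 (‖f x‖ - C)⌉₊ x := by
      rw [hqdef, hqMdef]
      simp only [hqBval]
      rw [min_eq_right (Nat.le_ceil _)]
    rw [h1]
    exact le_iSup (fun M => qM M x) _
  have hqMle : ∀ (M n i : ℕ) (ω : Ω), qM M (Y n i ω) ≤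
      Set.indicator {ω' | C < ‖f (Y n i ω')‖} (fun ω' => ENNReal.ofReal ‖f (Y n i ω')‖) ω := by
    intro M n i ω
    rw [hqMdef]
    simp only [hqBval]
    rcases le_or_gt (‖f (Y n i ω)‖) C with h | h
    · have h0 : max 0 (‖f (Y n i ω)‖ - C) = 0 := max_eq_left (by linarith)
      rw [h0, min_eq_right (Nat.cast_nonneg M)]
      simp
    · rw [Set.indicator_of_mem (by exact h)]
      apply ENNReal.ofReal_le_ofReal
      calc min (M:ℝ) (max 0 (‖f (Y n i ω)‖ - C)) ≤ max 0 (‖f (Y n i ω)‖ - C) := min_le_right _ _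
        _ ≤ ‖f (Y n i ω)‖ := max_le (norm_nonneg _) (by linarith)
  have htail : ∀ (M n i : ℕ), i < n → ∫⁻ ω, qM M (Y n i ω) ∂P ≤ ENNReal.ofReal ε' := by
    intro M n i hi
    have hs : MeasurableSet {ω' | C < ‖f (Y n i ω')‖} :=
      measurableSet_lt measurable_const ((hf.norm).measurable.comp (hmeas n i))
    calc ∫⁻ ω, qM M (Y n i ω) ∂P
        ≤ ∫⁻ ω, Set.indicator {ω' | C < ‖f (Y n i ω')‖}
            (fun ω' => ENNReal.ofReal ‖f (Y n i ω')‖) ω ∂P := lintegral_mono (hqMle M n i)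
      _ = ∫⁻ ω in {ω' | C < ‖f (Y n i ω')‖}, ENNReal.ofReal ‖f (Y n i ω)‖ ∂P :=
          lintegral_indicator hs _
      _ ≤ ENNReal.ofReal ε' := hC n i hi
  have hterm : ∀ (M n : ℕ), n ≠ 0 →
      ∫⁻ ω, (∫⁻ x, qM M x ∂(empMeasure n fun i => Y n i ω)) ∂P ≤ ENNReal.ofReal ε' := by
    intro M n hn
    have hrw : ∀ ω : Ω, ∫⁻ x, qM M x ∂(empMeasure n fun i => Y n i ω)
        = (n:ℝ≥0∞)⁻¹ * ∑ i ∈ Finset.range n, qM M (Y n i ω) := fun ω =>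
      lintegral_empMeasure n _ (qM M)
    calc ∫⁻ ω, (∫⁻ x, qM M x ∂(empMeasure n fun i => Y n i ω)) ∂P
        = (n:ℝ≥0∞)⁻¹ * ∫⁻ ω, ∑ i ∈ Finset.range n, qM M (Y n i ω) ∂P := by
          simp_rw [hrw]
          exact lintegral_const_mul _
            (Finset.measurable_sum _ (fun i _ => (hqMmeas M).comp (hmeas n i)))
      _ = (n:ℝ≥0∞)⁻¹ * ∑ i ∈ Finset.range n, ∫⁻ ω, qM M (Y n i ω) ∂P := by
          rw [lintegral_finset_sum (Finset.range n) (f := fun i ω => qM M (Y n i ω)) (fun i _ => (hqMmeas M).comp (hmeas n i))]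
      _ ≤ (n:ℝ≥0∞)⁻¹ * ∑ i ∈ Finset.range n, ENNReal.ofReal ε' := by
          gcongr with i hi
          exact htail M n i (Finset.mem_range.mp hi)
      _ = (n:ℝ≥0∞)⁻¹ * ((n:ℝ≥0∞) * ENNReal.ofReal ε') := by
          simp [Finset.sum_const, Finset.card_range, nsmul_eq_mul]
      _ ≤ ENNReal.ofReal ε' := by
          rw [← mul_assoc, ENNReal.inv_mul_cancel (by exact_mod_cast hn) (by simp), one_mul]
  have hMbound : ∀ M : ℕ, ∫⁻ ω, (∫⁻ x, qM M x ∂(ηlim ω)) ∂P ≤ ENNReal.ofReal ε' := by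
    intro M
    obtain ⟨ms, hms, hae⟩ := hsub id tendsto_id
    simp only [id] at hae
    have haeM : ∀ᵐ ω ∂P,
        Tendsto (fun k => ∫⁻ x, qM M x ∂(empMeasure (ms k) fun i => Y (ms k) i ω))
          atTop (nhds (∫⁻ x, qM M x ∂(ηlim ω))) := by
      filter_upwards [hae] with ω hω
      have h1 := (ENNReal.continuous_ofReal.tendsto _).comp (hω (qB M))
      have heq : ∀ μ : Measure 𝒳, IsFiniteMeasure μ →
          ENNReal.ofReal (∫ x, qB M x ∂μ) = ∫⁻ x, qM M x ∂μ := by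
        intro μ hμ
        exact MeasureTheory.ofReal_integral_eq_lintegral_ofReal ((qB M).integrable μ)
          (Filter.Eventually.of_forall (hqB0 M))
      haveI := hηp ω
      have h3 := heq (ηlim ω) inferInstance
      rw [← h3]
      refine Tendsto.congr (fun k => ?_) h1
      exact heq _ (isFiniteMeasure_empMeasure _ _)
    have hLmeas : ∀ k, Measurable fun ω =>
        ∫⁻ x, qM M x ∂(empMeasure (ms k) fun i => Y (ms k) i ω) := by
      intro k
      simp_rw [lintegral_empMeasure]
      exact (Finset.measurable_sum _ (fun i _ => (hqMmeas M).comp (hmeas _ i))).const_mul _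
    calc ∫⁻ ω, (∫⁻ x, qM M x ∂(ηlim ω)) ∂P
        = ∫⁻ ω, Filter.liminf
            (fun k => ∫⁻ x, qM M x ∂(empMeasure (ms k) fun i => Y (ms k) i ω)) atTop ∂P := by
          refine lintegral_congr_ae ?_
          filter_upwards [haeM] with ω hω
          exact hω.liminf_eq.symm
      _ ≤ Filter.liminf
            (fun k => ∫⁻ ω, ∫⁻ x, qM M x ∂(empMeasure (ms k) fun i => Y (ms k) i ω) ∂P) atTop :=
          lintegral_liminf_le hLmeas
      _ ≤ ENNReal.ofReal ε' := by
          refine Filter.liminf_le_of_frequently_le' ?_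
          refine ((eventually_ge_atTop 1).mono fun k hk => ?_).frequently
          exact hterm M (ms k) (by have h : k ≤ ms k := hms.le_apply; omega)
  have hTbound : ∫⁻ ω, T ω ∂P ≤ ENNReal.ofReal (2 * ε') := by
    have hstep1 : ∀ ω : Ω, ∫⁻ x, q x ∂(ηlim ω) = ⨆ M : ℕ, ∫⁻ x, qM M x ∂(ηlim ω) := by
      intro ω
      rw [← lintegral_iSup (fun M => hqMmeas M) (fun a b hab x => hqMmono x hab)]
      exact lintegral_congr fun x => (hsupq x).symm
    calc ∫⁻ ω, T ω ∂P = 2 * ∫⁻ ω, ∫⁻ x, q x ∂(ηlim ω) ∂P := by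
          rw [hTdef]
          exact lintegral_const_mul 2 ((Measure.measurable_lintegral hqmeas).comp hηm)
      _ = 2 * ∫⁻ ω, ⨆ M : ℕ, ∫⁻ x, qM M x ∂(ηlim ω) ∂P := by
          congr 1
          exact lintegral_congr hstep1
      _ = 2 * ⨆ M : ℕ, ∫⁻ ω, ∫⁻ x, qM M x ∂(ηlim ω) ∂P := by
          congr 1
          exact lintegral_iSup (fun M => (Measure.measurable_lintegral (hqMmeas M)).comp hηm)
            (fun a b hab ω => lintegral_mono fun x => hqMmono x hab)
      _ ≤ 2 * ENNReal.ofReal ε' := by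
          gcongr
          exact iSup_le hMbound
      _ = ENNReal.ofReal (2 * ε') := by
          rw [ENNReal.ofReal_mul (by norm_num : (0:ℝ) ≤ 2), ENNReal.ofReal_ofNat]
  have hfYmeas : ∀ n i, Measurable fun ω => ‖f (Y n i ω)‖ :=
    fun n i => (hf.norm).measurable.comp (hmeas n i)
  have hsetmeas : ∀ (c : ℝ) (n i : ℕ), MeasurableSet {ω' | c < ‖f (Y n i ω')‖} :=
    fun c n i => measurableSet_lt measurable_const (hfYmeas n i)
  -- empirical tail average (real) and Markov bounds
  set tR : ℕ → ℕ → Ω → ℝ := fun n i ω => if 2*C < ‖f (Y n i ω)‖ then ‖f (Y n i ω)‖ else 0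
    with htRdef
  have htR0 : ∀ n i ω, 0 ≤ tR n i ω := by
    intro n i ω
    rw [htRdef]
    dsimp only
    split_ifs
    exacts [norm_nonneg _, le_rfl]
  set U : ℕ → Ω → ℝ := fun n ω => (n:ℝ)⁻¹ * ∑ i ∈ Finset.range n, tR n i ω with hUdef
  have hU0 : ∀ n ω, 0 ≤ U n ω := fun n ω =>
    mul_nonneg (by positivity) (Finset.sum_nonneg fun i _ => htR0 n i ω)
  have htRof : ∀ n i, (fun ω => ENNReal.ofReal (tR n i ω)) =
      Set.indicator {ω' | 2*C < ‖f (Y n i ω')‖} (fun ω' => ENNReal.ofReal ‖f (Y n i ω')‖) := by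
    intro n i
    funext ω
    rw [htRdef]
    dsimp only
    by_cases h : 2*C < ‖f (Y n i ω)‖
    · rw [if_pos h, Set.indicator_of_mem (by exact h)]
    · rw [if_neg h, Set.indicator_of_notMem (by exact h)]
      simp
  have htRmeas : ∀ n i, Measurable fun ω => ENNReal.ofReal (tR n i ω) := by
    intro n i
    rw [htRof]
    exact Measurable.indicator
      (ENNReal.measurable_ofReal.comp (hfYmeas n i)) (hsetmeas _ n i)
  have htRint : ∀ n i, i < n → ∫⁻ ω, ENNReal.ofReal (tR n i ω) ∂P ≤ ENNReal.ofReal ε' := by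
    intro n i hi
    rw [htRof]
    rw [lintegral_indicator (hsetmeas _ n i) _]
    refine le_trans (lintegral_mono_set ?_) (hC n i hi)
    intro ω hω
    simp only [Set.mem_setOf_eq] at hω ⊢
    linarith
  have hUof : ∀ n, n ≠ 0 → ∀ ω, ENNReal.ofReal (U n ω)
      = (n:ℝ≥0∞)⁻¹ * ∑ i ∈ Finset.range n, ENNReal.ofReal (tR n i ω) := by
    intro n hn ω
    rw [hUdef]
    dsimp only
    rw [ENNReal.ofReal_mul (by positivity), ENNReal.ofReal_sum_of_nonneg (fun i _ => htR0 n i ω)]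
    congr 1
    rw [ENNReal.ofReal_inv_of_pos (by exact_mod_cast Nat.pos_of_ne_zero hn),
      ENNReal.ofReal_natCast]
  have hUlint : ∀ n, n ≠ 0 → ∫⁻ ω, ENNReal.ofReal (U n ω) ∂P ≤ ENNReal.ofReal ε' := by
    intro n hn
    simp_rw [hUof n hn]
    calc ∫⁻ ω, (n:ℝ≥0∞)⁻¹ * ∑ i ∈ Finset.range n, ENNReal.ofReal (tR n i ω) ∂P
        = (n:ℝ≥0∞)⁻¹ * ∫⁻ ω, ∑ i ∈ Finset.range n, ENNReal.ofReal (tR n i ω) ∂P :=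
          lintegral_const_mul _ (Finset.measurable_sum _ (fun i _ => htRmeas n i))
      _ = (n:ℝ≥0∞)⁻¹ * ∑ i ∈ Finset.range n, ∫⁻ ω, ENNReal.ofReal (tR n i ω) ∂P := by
          rw [lintegral_finset_sum (Finset.range n) (fun i _ => htRmeas n i)]
      _ ≤ (n:ℝ≥0∞)⁻¹ * ∑ i ∈ Finset.range n, ENNReal.ofReal ε' := by
          gcongr with i hi
          exact htRint n i (Finset.mem_range.mp hi)
      _ = (n:ℝ≥0∞)⁻¹ * ((n:ℝ≥0∞) * ENNReal.ofReal ε') := by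
          simp [Finset.sum_const, Finset.card_range, nsmul_eq_mul]
      _ ≤ ENNReal.ofReal ε' := by
          rw [← mul_assoc, ENNReal.inv_mul_cancel (by exact_mod_cast hn) (by simp), one_mul]
  have hUmeas : ∀ n, Measurable fun ω => ENNReal.ofReal (U n ω) := by
    intro n
    apply Measurable.ennreal_ofReal
    apply Measurable.const_mul
    refine Finset.measurable_sum _ fun i _ => ?_
    exact Measurable.ite (hsetmeas _ n i) (hfYmeas n i) measurable_const
  have hA : ∀ n, n ≠ 0 → P {ω | ε/3 ≤ U n ω} ≤ ENNReal.ofReal (r/8) := by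
    intro n hn
    have hset : {ω | ε/3 ≤ U n ω} = {ω | ENNReal.ofReal (ε/3) ≤ ENNReal.ofReal (U n ω)} := by
      ext ω
      simp only [Set.mem_setOf_eq]
      rw [ENNReal.ofReal_le_ofReal_iff (hU0 n ω)]
    rw [hset]
    calc P {ω | ENNReal.ofReal (ε/3) ≤ ENNReal.ofReal (U n ω)}
        ≤ (∫⁻ ω, ENNReal.ofReal (U n ω) ∂P) / ENNReal.ofReal (ε/3) :=
          meas_ge_le_lintegral_div (hUmeas n).aemeasurable
            (ENNReal.ofReal_pos.mpr hε3).ne' ENNReal.ofReal_ne_top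
      _ ≤ ENNReal.ofReal ε' / ENNReal.ofReal (ε/3) := by
          gcongr
          exact hUlint n hn
      _ = ENNReal.ofReal (ε' / (ε/3)) := (ENNReal.ofReal_div_of_pos hε3).symm
      _ = ENNReal.ofReal (r/8) := by
          congr 1
          rw [hε'def, mul_div_cancel_left₀ _ (ne_of_gt hε3)]
  have hBbound : P {ω | ENNReal.ofReal (ε/3) ≤ T ω} ≤ ENNReal.ofReal (r/4) := by
    calc P {ω | ENNReal.ofReal (ε/3) ≤ T ω}
        ≤ (∫⁻ ω, T ω ∂P) / ENNReal.ofReal (ε/3) :=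
          meas_ge_le_lintegral_div hTmeas.aemeasurable
            (ENNReal.ofReal_pos.mpr hε3).ne' ENNReal.ofReal_ne_top
      _ ≤ ENNReal.ofReal (2*ε') / ENNReal.ofReal (ε/3) := by gcongr
      _ = ENNReal.ofReal ((2*ε') / (ε/3)) := (ENNReal.ofReal_div_of_pos hε3).symm
      _ = ENNReal.ofReal (r/4) := by
          congr 1
          have h24 : 2*ε' = (ε/3) * (r/4) := by rw [hε'def]; ring
          rw [h24, mul_div_cancel_left₀ _ (ne_of_gt hε3)]
  -- truncated empirical averages and their limit
  set gB : Fin d → BoundedContinuousFunction 𝒳 ℝ := fun i =>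
    BoundedContinuousFunction.ofNormedAddCommGroup (fun x => g x i)
      ((continuous_apply i).comp hgcont) (2*C+1)
      (fun x => by
        rw [Real.norm_eq_abs]
        calc |g x i| = ‖g x i‖ := rfl
          _ ≤ ‖g x‖ := norm_le_pi_norm (g x) i
          _ ≤ 2*C+1 := hgnorm x) with hgBdef
  have hgBval : ∀ (i : Fin d) x, gB i x = g x i := fun i x => rfl
  set Ig : Ω → Fin d → ℝ := fun ω i => ∫ x, gB i x ∂(ηlim ω) with hIgdef
  have hIgmeas : Measurable Ig := by
    apply measurable_pi_lambda
    intro i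
    have hint : ∀ ω, Integrable (fun x => gB i x) (ηlim ω) := fun ω => by
      haveI := hηp ω
      exact (gB i).integrable _
    have hrepr : ∀ ω : Ω, ∫ x, gB i x ∂(ηlim ω)
        = (∫⁻ x, ENNReal.ofReal (gB i x) ∂(ηlim ω)).toReal
          - (∫⁻ x, ENNReal.ofReal (-(gB i x)) ∂(ηlim ω)).toReal := fun ω =>
      integral_eq_lintegral_pos_part_sub_lintegral_neg_part (hint ω)
    simp only [hIgdef]
    simp_rw [hrepr]
    refine Measurable.sub ?_ ?_
    · exact ((Measure.measurable_lintegral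
        (ENNReal.measurable_ofReal.comp (gB i).continuous.measurable)).comp hηm).ennreal_toReal
    · exact ((Measure.measurable_lintegral
        (ENNReal.measurable_ofReal.comp (gB i).continuous.measurable.neg)).comp hηm).ennreal_toReal
  set Sg : ℕ → Ω → Fin d → ℝ := fun n ω => (n:ℝ)⁻¹ • ∑ i ∈ Finset.range n, g (Y n i ω)
    with hSgdef
  have hSgmeas : ∀ n, Measurable (Sg n) := by
    intro n
    have hsum : Measurable fun ω => ∑ i ∈ Finset.range n, g (Y n i ω) :=
      Finset.measurable_sum _ fun i _ => hgcont.measurable.comp (hmeas n i)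
    exact hsum.const_smul ((n:ℝ)⁻¹)
  have hSgemp : ∀ (n : ℕ) (ω : Ω) (i : Fin d),
      (∫ x, gB i x ∂(empMeasure n fun j => Y n j ω)) = Sg n ω i := by
    intro n ω i
    rw [integral_empMeasure]
    rw [hSgdef]
    simp only [Pi.smul_apply, smul_eq_mul, Finset.sum_apply]
    rfl
  have hCtend : Tendsto (fun n => P {ω | ε/3 ≤ ‖Sg n ω - Ig ω‖}) atTop (nhds 0) := by
    refine tendsto_of_subseq_tendsto fun ns hns => ?_
    obtain ⟨ms, hms, hae⟩ := hsub ns hns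
    have haeS : ∀ᵐ ω ∂P, Tendsto (fun k => Sg (ns (ms k)) ω) atTop (nhds (Ig ω)) := by
      filter_upwards [hae] with ω hω
      rw [tendsto_pi_nhds]
      intro i
      have h1 := hω (gB i)
      exact Tendsto.congr (fun k => hSgemp (ns (ms k)) ω i) h1
    have htim2 : TendstoInMeasure P (fun k => Sg (ns (ms k))) atTop Ig :=
      tendstoInMeasure_of_tendsto_ae (fun k => (hSgmeas _).aestronglyMeasurable) haeS
    refine ⟨ms, ?_⟩
    have h2 := (tendstoInMeasure_iff_dist.mp htim2) (ε/3) hε3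
    simp only [dist_eq_norm] at h2
    exact h2
  -- final assembly
  obtain ⟨N, hN⟩ := eventually_atTop.mp (ENNReal.tendsto_nhds_zero.mp hCtend
    (ENNReal.ofReal (r/8)) (ENNReal.ofReal_pos.mpr (by linarith)))
  filter_upwards [eventually_ge_atTop (max N 1)] with n hn
  have hn1 : n ≠ 0 := by
    have := le_trans (le_max_right N 1) hn
    omega
  have hnN : N ≤ n := le_trans (le_max_left _ _) hn
  have hincl : {ω | ε ≤ ‖(n : ℝ)⁻¹ • (∑ i ∈ Finset.range n, f (Y n i ω)) - ∫ x, f x ∂(ηlim ω)‖}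
      ⊆ {ω | ε/3 ≤ U n ω} ∪ ({ω | ENNReal.ofReal (ε/3) ≤ T ω}
          ∪ {ω | ε/3 ≤ ‖Sg n ω - Ig ω‖}) := by
    intro ω hω
    simp only [Set.mem_setOf_eq] at hω
    simp only [Set.mem_union, Set.mem_setOf_eq]
    by_contra hcon
    push_neg at hcon
    obtain ⟨h1, h2, h3⟩ := hcon
    have hTlt : T ω < ENNReal.ofReal (ε/3) := h2
    have hTfin : T ω ≠ ⊤ := hTlt.ne_top
    have hqfin : ∫⁻ x, q x ∂(ηlim ω) ≠ ⊤ := by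
      intro hcontra
      rw [hTdef] at hTfin
      simp only [hcontra] at hTfin
      exact hTfin (by simp [ENNReal.mul_top])
    haveI := hηp ω
    -- integrability of f
    have hfint : Integrable f (ηlim ω) := by
      refine ⟨hf.aestronglyMeasurable, ?_⟩
      rw [hasFiniteIntegral_iff_norm]
      have hptw : ∀ x, ENNReal.ofReal ‖f x‖ ≤ ENNReal.ofReal C + q x := by
        intro x
        rw [hqdef]
        calc ENNReal.ofReal ‖f x‖ ≤ ENNReal.ofReal (C + max 0 (‖f x‖ - C)) := by
              apply ENNReal.ofReal_le_ofReal
              have := le_max_right (0:ℝ) (‖f x‖ - C)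
              linarith
          _ = ENNReal.ofReal C + ENNReal.ofReal (max 0 (‖f x‖ - C)) :=
              ENNReal.ofReal_add hC0 (le_max_left _ _)
      calc ∫⁻ x, ENNReal.ofReal ‖f x‖ ∂(ηlim ω) ≤ ∫⁻ x, (ENNReal.ofReal C + q x) ∂(ηlim ω) :=
            lintegral_mono hptw
        _ = ENNReal.ofReal C * (ηlim ω) Set.univ + ∫⁻ x, q x ∂(ηlim ω) := by
            rw [lintegral_add_right _ hqmeas, lintegral_const]
        _ < ⊤ := by
            rw [measure_univ]
            exact ENNReal.add_lt_top.mpr ⟨by simp [ENNReal.ofReal_lt_top], hqfin.lt_top⟩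
    have hgint : Integrable g (ηlim ω) := by
      refine ⟨hgcont.aestronglyMeasurable, ?_⟩
      exact HasFiniteIntegral.of_bounded (C := 2*C+1) (Filter.Eventually.of_forall hgnorm)
    -- identify Ig with the vector integral of g
    have hIgvec : Ig ω = ∫ x, g x ∂(ηlim ω) := by
      funext i
      have hproj := (ContinuousLinearMap.proj (R := ℝ) (φ := fun _ : Fin d => ℝ) i
        ).integral_comp_comm hgint
      simp only [ContinuousLinearMap.proj_apply] at hproj
      rw [hIgdef]
      exact hproj
    -- bound ‖Ig - I‖
    have hmaxint : Integrable (fun x => 2 * max 0 (‖f x‖ - C)) (ηlim ω) := by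
      refine ⟨(continuous_const.mul (continuous_const.max
        ((hf.norm).sub continuous_const))).aestronglyMeasurable, ?_⟩
      rw [hasFiniteIntegral_iff_norm]
      have hptw : ∀ x, ENNReal.ofReal ‖2 * max 0 (‖f x‖ - C)‖ = 2 * q x := by
        intro x
        rw [hqdef]
        rw [Real.norm_eq_abs, abs_of_nonneg (by positivity),
          ENNReal.ofReal_mul (by norm_num : (0:ℝ) ≤ 2), ENNReal.ofReal_ofNat]
      simp_rw [hptw]
      rw [lintegral_const_mul _ hqmeas]
      exact ENNReal.mul_lt_top (by simp) hqfin.lt_top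
    have hIdiff : ‖Ig ω - ∫ x, f x ∂(ηlim ω)‖ < ε/3 := by
      have hb1 : ‖Ig ω - ∫ x, f x ∂(ηlim ω)‖ ≤ ∫ x, 2 * max 0 (‖f x‖ - C) ∂(ηlim ω) := by
        rw [hIgvec, ← integral_sub hgint hfint]
        calc ‖∫ x, (g x - f x) ∂(ηlim ω)‖ ≤ ∫ x, ‖g x - f x‖ ∂(ηlim ω) :=
              norm_integral_le_integral_norm _
          _ ≤ ∫ x, 2 * max 0 (‖f x‖ - C) ∂(ηlim ω) := by
              have hfg' : ∀ x, ‖g x - f x‖ ≤ 2 * max 0 (‖f x‖ - C) := by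
                intro x
                rw [norm_sub_rev]
                exact hfg x
              exact integral_mono ((hgint.sub hfint).norm) hmaxint fun x => hfg' x
      have hb2 : ∫ x, 2 * max 0 (‖f x‖ - C) ∂(ηlim ω) = (T ω).toReal := by
        rw [hTdef]
        rw [integral_eq_lintegral_of_nonneg_ae (f := fun x => 2 * max 0 (‖f x‖ - C)) (Filter.Eventually.of_forall fun x => by positivity)
          (continuous_const.mul (continuous_const.max
            ((hf.norm).sub continuous_const))).aestronglyMeasurable]
        congr 1
        have hptw : ∀ x : 𝒳, ENNReal.ofReal (2 * max 0 (‖f x‖ - C)) = 2 * q x := by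
          intro x
          rw [hqdef, ENNReal.ofReal_mul (by norm_num : (0:ℝ) ≤ 2), ENNReal.ofReal_ofNat]
        simp_rw [hptw]
        exact lintegral_const_mul _ hqmeas
      have hb3 : (T ω).toReal < ε/3 := by
        rw [← ENNReal.lt_ofReal_iff_toReal_lt hTfin]
        exact hTlt
      calc ‖Ig ω - ∫ x, f x ∂(ηlim ω)‖ ≤ (T ω).toReal := hb1.trans (le_of_eq hb2)
        _ < ε/3 := hb3
    -- bound ‖S - Sg‖
    have hSdiff : ‖(n : ℝ)⁻¹ • (∑ i ∈ Finset.range n, f (Y n i ω)) - Sg n ω‖ ≤ U n ω := by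
      have hrw2 : (n : ℝ)⁻¹ • (∑ i ∈ Finset.range n, f (Y n i ω)) - Sg n ω
          = (n:ℝ)⁻¹ • ∑ i ∈ Finset.range n, (f (Y n i ω) - g (Y n i ω)) := by
        rw [hSgdef]
        dsimp only
        rw [← smul_sub, Finset.sum_sub_distrib]
      rw [hrw2, norm_smul, Real.norm_eq_abs, abs_of_nonneg (by positivity), hUdef]
      dsimp only
      refine mul_le_mul_of_nonneg_left ?_ (by positivity)
      calc ‖∑ i ∈ Finset.range n, (f (Y n i ω) - g (Y n i ω))‖
          ≤ ∑ i ∈ Finset.range n, ‖f (Y n i ω) - g (Y n i ω)‖ := norm_sum_le _ _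
        _ ≤ ∑ i ∈ Finset.range n, tR n i ω := by
            refine Finset.sum_le_sum fun i _ => ?_
            rw [htRdef]
            exact hfgtail (Y n i ω)
    -- contradiction
    have htri : ‖(n : ℝ)⁻¹ • (∑ i ∈ Finset.range n, f (Y n i ω)) - ∫ x, f x ∂(ηlim ω)‖
        ≤ ‖(n : ℝ)⁻¹ • (∑ i ∈ Finset.range n, f (Y n i ω)) - Sg n ω‖
          + ‖Sg n ω - Ig ω‖ + ‖Ig ω - ∫ x, f x ∂(ηlim ω)‖ := by
      have h4 := dist_triangle4 ((n : ℝ)⁻¹ • (∑ i ∈ Finset.range n, f (Y n i ω)))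
        (Sg n ω) (Ig ω) (∫ x, f x ∂(ηlim ω))
      simp only [dist_eq_norm] at h4
      exact h4
    have : ε < ε := by
      calc ε ≤ ‖(n : ℝ)⁻¹ • (∑ i ∈ Finset.range n, f (Y n i ω)) - ∫ x, f x ∂(ηlim ω)‖ := hω
        _ ≤ _ := htri
        _ < ε/3 + ε/3 + ε/3 := by
            have hS3 : ‖(n : ℝ)⁻¹ • (∑ i ∈ Finset.range n, f (Y n i ω)) - Sg n ω‖ < ε/3 :=
              lt_of_le_of_lt hSdiff h1
            have hSg3 : ‖Sg n ω - Ig ω‖ < ε/3 := h3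
            linarith
        _ = ε := by ring
    exact lt_irrefl ε this
  calc P {ω | ε ≤ ‖(n : ℝ)⁻¹ • (∑ i ∈ Finset.range n, f (Y n i ω)) - ∫ x, f x ∂(ηlim ω)‖}
      ≤ P ({ω | ε/3 ≤ U n ω} ∪ ({ω | ENNReal.ofReal (ε/3) ≤ T ω}
          ∪ {ω | ε/3 ≤ ‖Sg n ω - Ig ω‖})) := measure_mono hincl
    _ ≤ P {ω | ε/3 ≤ U n ω} + P ({ω | ENNReal.ofReal (ε/3) ≤ T ω}
          ∪ {ω | ε/3 ≤ ‖Sg n ω - Ig ω‖}) := measure_union_le _ _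
    _ ≤ P {ω | ε/3 ≤ U n ω} + (P {ω | ENNReal.ofReal (ε/3) ≤ T ω}
          + P {ω | ε/3 ≤ ‖Sg n ω - Ig ω‖}) := by
        gcongr
        exact measure_union_le _ _
    _ ≤ ENNReal.ofReal (r/8) + (ENNReal.ofReal (r/4) + ENNReal.ofReal (r/8)) := by
        gcongr <;> first
          | exact hA n hn1
          | exact hBbound
          | exact hN n hnN
    _ = ENNReal.ofReal (r/8 + (r/4 + r/8)) := by
        rw [← ENNReal.ofReal_add (by linarith) (by linarith),
          ← ENNReal.ofReal_add (by linarith) (by linarith)]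
    _ ≤ ENNReal.ofReal r := ENNReal.ofReal_le_ofReal (by linarith)
    _ ≤ δ := hrδ
end
end

section
/- Sufficient condition for mutual conditional independence (Lemma A.6 / CIsuff): Let (Y_i)_{i=1}^k be random elements of a Polish space 𝒴 on a probability space and let ℱ be a sub-σ-algebra. Then (Y_i)_{i=1}^k are mutually conditionally independent given ℱ if and only if for every j ∈ {1,…,k}, Y_j is conditionally independent of the vector (Y_i)_{i≠j} given ℱ. -/
open MeasureTheory ProbabilityTheory Filter

noncomputable section

open CoevolveNet MeasureTheory ProbabilityTheory Filter

section AuxLemmas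

open MeasureTheory Filter ENNReal

private lemma aux_max_sub_max (a : ℝ) : max a 0 - max (-a) 0 = a := by
  rcases le_total a 0 with h | h
  · rw [max_eq_right h, max_eq_left (by linarith)]; ring
  · rw [max_eq_left h, max_eq_right (by linarith)]; ring

private lemma aux_indicator_pi_prod {ι : Type*} [Fintype ι] {α : ι → Type*}
    (t : ∀ i, Set (α i)) (v : ∀ i, α i) :
    Set.indicator (Set.pi Set.univ t) (fun _ => (1:ℝ)) v
      = ∏ i, Set.indicator (t i) (fun _ => (1:ℝ)) (v i) := by
  by_cases h : v ∈ Set.pi Set.univ t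
  · rw [Set.indicator_of_mem h]
    exact (Finset.prod_eq_one fun i _ => Set.indicator_of_mem (h i (Set.mem_univ i)) _).symm
  · rw [Set.indicator_of_notMem h]
    rw [Set.mem_univ_pi] at h
    push_neg at h
    obtain ⟨i, hi⟩ := h
    exact (Finset.prod_eq_zero (Finset.mem_univ i) (Set.indicator_of_notMem hi _)).symm

private lemma aux_isBdd_prod {α ι : Type*} (s : Finset ι) (f : ι → α → ℝ)
    (h : ∀ i ∈ s, ∃ C, ∀ x, |f i x| ≤ C) :
    ∃ C, ∀ x, |∏ i ∈ s, f i x| ≤ C := by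
  classical
  induction s using Finset.induction_on with
  | empty => exact ⟨1, by simp⟩
  | insert j s hj ih =>
    obtain ⟨C1, hC1⟩ := h j (Finset.mem_insert_self j s)
    obtain ⟨C2, hC2⟩ := ih fun i hi => h i (Finset.mem_insert_of_mem hi)
    refine ⟨max C1 0 * max C2 0, fun x => ?_⟩
    rw [Finset.prod_insert hj, abs_mul]
    exact mul_le_mul ((hC1 x).trans (le_max_left _ _))
      ((hC2 x).trans (le_max_left _ _)) (abs_nonneg _) (le_max_right _ _)

section NoSubAlgebra

variable {Ω : Type*} {mΩ : MeasurableSpace Ω} {P : Measure Ω} [IsProbabilityMeasure P]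

private lemma aux_integrable {f : Ω → ℝ} (hf : Measurable f) {C : ℝ} (hC : ∀ ω, |f ω| ≤ C) :
    Integrable f P :=
  (integrable_const C).mono' hf.aestronglyMeasurable
    (Eventually.of_forall fun ω => by simpa [Real.norm_eq_abs] using hC ω)

private lemma aux_meas_pi {ι E' : Type*} [MeasurableSpace E'] (W : ι → Ω → E')
    (hW : ∀ i, Measurable (W i)) : Measurable fun ω => fun i => W i ω :=
  measurable_pi_lambda _ fun i => hW i

/-- The auxiliary measure `F_*( (1_s · h) dP )`. -/
private noncomputable def auxMeas {E : Type*} [MeasurableSpace E]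
    (P : Measure Ω) (s : Set Ω) (F : Ω → E) (h : Ω → ℝ) : Measure E :=
  Measure.map F ((P.restrict s).withDensity fun ω => ENNReal.ofReal (h ω))

private lemma aux_fin {E : Type*} [MeasurableSpace E] {F : Ω → E} (hF : Measurable F)
    (s : Set Ω) {h : Ω → ℝ} (hh : Measurable h) {c : ℝ} (hhc : ∀ᵐ ω ∂P, h ω ≤ c) :
    IsFiniteMeasure (auxMeas P s F h) := by
  constructor
  rw [auxMeas, Measure.map_apply hF MeasurableSet.univ, Set.preimage_univ,
    withDensity_apply _ MeasurableSet.univ, Measure.restrict_univ]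
  calc ∫⁻ ω, ENNReal.ofReal (h ω) ∂(P.restrict s)
      ≤ ∫⁻ _, ENNReal.ofReal c ∂(P.restrict s) := by
        refine lintegral_mono_ae (ae_restrict_of_ae ?_)
        filter_upwards [hhc] with ω hω
        exact ENNReal.ofReal_le_ofReal hω
    _ = ENNReal.ofReal c * (P.restrict s) Set.univ := by rw [lintegral_const]
    _ < ⊤ := ENNReal.mul_lt_top ENNReal.ofReal_lt_top (measure_lt_top _ _)

private lemma aux_compute {E : Type*} [MeasurableSpace E] {F : Ω → E} (hF : Measurable F)
    {s : Set Ω} {h : Ω → ℝ} (hh : Measurable h) (hh0 : 0 ≤ᵐ[P] h)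
    {g' : E → ℝ} (hg' : Measurable g') :
    ∫ x, g' x ∂(auxMeas P s F h) = ∫ ω in s, h ω * g' (F ω) ∂P := by
  have hd : (fun ω => ENNReal.ofReal (h ω))
      = fun ω => ((Real.toNNReal (h ω)) : ENNReal) := rfl
  rw [auxMeas, integral_map hF.aemeasurable hg'.aestronglyMeasurable, hd,
    integral_withDensity_eq_integral_smul hh.real_toNNReal]
  refine integral_congr_ae (ae_restrict_of_ae ?_)
  filter_upwards [hh0] with ω hω
  have hω' : 0 ≤ h ω := hω
  simp [NNReal.smul_def, Real.coe_toNNReal _ hω']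

private lemma aux_measC {E : Type*} [MeasurableSpace E] {F : Ω → E} (hF : Measurable F)
    {s : Set Ω} {h : Ω → ℝ} (hh : Measurable h) (hh0 : 0 ≤ᵐ[P] h) (hhint : Integrable h P)
    {A : Set E} (hA : MeasurableSet A) :
    auxMeas P s F h A
      = ENNReal.ofReal (∫ ω in s, h ω * Set.indicator A (fun _ => (1:ℝ)) (F ω) ∂P) := by
  have hindm : Measurable fun ω => Set.indicator A (fun _ => (1:ℝ)) (F ω) :=
    (measurable_const.indicator hA).comp hF
  have hXint : Integrable (fun ω => h ω * Set.indicator A (fun _ => (1:ℝ)) (F ω)) P := by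
    have h2 : Integrable (fun ω => Set.indicator A (fun _ => (1:ℝ)) (F ω) * h ω) P := by
      refine hhint.bdd_mul (c := 1) hindm.aestronglyMeasurable
        (Eventually.of_forall fun ω => ?_)
      by_cases hω : F ω ∈ A <;>
        simp [Set.indicator_of_mem, Set.indicator_of_notMem, hω]
    simpa [mul_comm] using h2
  rw [auxMeas, Measure.map_apply hF hA, withDensity_apply _ (hF hA),
    ofReal_integral_eq_lintegral_ofReal (hXint.restrict)
      (ae_restrict_of_ae (by
        filter_upwards [hh0] with ω hω
        have hω' : 0 ≤ h ω := hω
        by_cases hmem : F ω ∈ A <;>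
          simp [Set.indicator_of_mem, Set.indicator_of_notMem, hmem, hω']))]
  rw [← lintegral_indicator (hF hA)]
  refine lintegral_congr fun ω => ?_
  by_cases hmem : F ω ∈ A
  · simp [Set.indicator_of_mem, hmem, Set.mem_preimage]
  · simp [Set.indicator_of_notMem, hmem, Set.mem_preimage]

end NoSubAlgebra

variable {Ω : Type*} {mΩ : MeasurableSpace Ω} {P : Measure Ω} [IsProbabilityMeasure P]
  {m : MeasurableSpace Ω}

private lemma aux_setIntegral_mul_condexp (hm : m ≤ mΩ) {h g : Ω → ℝ}
    (hh : StronglyMeasurable[m] h) {c : ℝ} (hhb : ∀ᵐ ω ∂P, ‖h ω‖ ≤ c)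
    (hg : Integrable g P) {s : Set Ω} (hs : MeasurableSet[m] s) :
    ∫ ω in s, h ω * (P[g|m]) ω ∂P = ∫ ω in s, h ω * g ω ∂P := by
  have h1 : P[h * g|m] =ᵐ[P] h * P[g|m] :=
    condExp_stronglyMeasurable_mul_of_bound hm hh hg c hhb
  have hint : Integrable (h * g) P :=
    hg.bdd_mul (hh.mono hm).aestronglyMeasurable hhb
  calc ∫ ω in s, h ω * (P[g|m]) ω ∂P
      = ∫ ω in s, (P[h * g|m]) ω ∂P := by
        refine integral_congr_ae (ae_restrict_of_ae ?_)
        filter_upwards [h1] with ω hω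
        rw [hω]; rfl
    _ = ∫ ω in s, (h * g) ω ∂P := setIntegral_condExp hm hint hs
    _ = ∫ ω in s, h ω * g ω ∂P := rfl

private lemma aux_key {E : Type*} (hm : m ≤ mΩ)
    {mE : MeasurableSpace E} {C : Set (Set E)} (hC_pi : IsPiSystem C)
    (hC_gen : mE = MeasurableSpace.generateFrom C) (hC_univ : Set.univ ∈ C)
    {F : Ω → E} (hF : Measurable[mΩ] F)
    {f : Ω → ℝ} (hf : Measurable[mΩ] f) {c : ℝ} (hf0 : ∀ ω, 0 ≤ f ω) (hfc : ∀ ω, f ω ≤ c)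
    (hbox : ∀ A ∈ C,
      P[fun ω => f ω * Set.indicator A (fun _ => (1:ℝ)) (F ω)|m]
        =ᵐ[P] fun ω => (P[f|m]) ω *
          (P[fun ω' => Set.indicator A (fun _ => (1:ℝ)) (F ω')|m]) ω)
    {g : E → ℝ} (hg : Measurable g) {cg : ℝ} (hgb : ∀ x, |g x| ≤ cg) :
    P[fun ω => f ω * g (F ω)|m]
      =ᵐ[P] fun ω => (P[f|m]) ω * (P[fun ω' => g (F ω')|m]) ω := by
  have hne : Nonempty Ω := by
    by_contra hno
    rw [not_nonempty_iff] at hno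
    have h1 : P Set.univ = 1 := measure_univ
    rw [Set.univ_eq_empty_iff.mpr hno] at h1
    simp at h1
  obtain ⟨ω₀⟩ := hne
  have hc0 : 0 ≤ c := (hf0 ω₀).trans (hfc ω₀)
  have hcg0 : 0 ≤ cg := (abs_nonneg _).trans (hgb (F ω₀))
  have hfabs : ∀ ω, |f ω| ≤ c := fun ω => abs_le.2 ⟨by linarith [hf0 ω], hfc ω⟩
  have hf_int : Integrable f P := aux_integrable hf hfabs
  have hgF_meas : Measurable[mΩ] fun ω => g (F ω) := hg.comp hF
  have hgF_int : Integrable (fun ω => g (F ω)) P := aux_integrable hgF_meas fun ω => hgb _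
  have hEf_bd : ∀ᵐ ω ∂P, |(P[f|m]) ω| ≤ c := by
    have := ae_bdd_condExp_of_ae_bdd (μ := P) (m := m) (R := ⟨c, hc0⟩)
      (Eventually.of_forall hfabs)
    exact this
  have hEf_bd' : ∀ᵐ ω ∂P, ‖(P[f|m]) ω‖ ≤ c := by
    simpa [Real.norm_eq_abs] using hEf_bd
  have hEf_nonneg : 0 ≤ᵐ[P] P[f|m] := condExp_nonneg (Eventually.of_forall hf0)
  have hEf_meas : Measurable[mΩ] (P[f|m]) := (stronglyMeasurable_condExp.mono hm).measurable
  have hEf_asm : AEStronglyMeasurable[mΩ] (P[f|m]) P := hEf_meas.aestronglyMeasurable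
  have hAmeas : ∀ A ∈ C, MeasurableSet A := by
    intro A hA
    rw [hC_gen]
    exact MeasurableSpace.measurableSet_generateFrom hA
  -- equality of set integrals against arbitrary bounded measurable g
  have hmain : ∀ s : Set Ω, MeasurableSet[m] s →
      ∫ ω in s, f ω * g (F ω) ∂P = ∫ ω in s, (P[f|m]) ω * g (F ω) ∂P := by
    intro s hs
    -- set-integral equality for boxes
    have hsetbox : ∀ A ∈ C,
        ∫ ω in s, f ω * Set.indicator A (fun _ => (1:ℝ)) (F ω) ∂P
          = ∫ ω in s, (P[f|m]) ω * Set.indicator A (fun _ => (1:ℝ)) (F ω) ∂P := by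
      intro A hA
      have hAm := hAmeas A hA
      have hindm : Measurable[mΩ] fun ω => Set.indicator A (fun _ => (1:ℝ)) (F ω) :=
        (measurable_const.indicator hAm).comp hF
      have hind_int : Integrable (fun ω => Set.indicator A (fun _ => (1:ℝ)) (F ω)) P := by
        refine aux_integrable hindm (C := 1) fun ω => ?_
        by_cases hω : F ω ∈ A <;>
          simp [Set.indicator_of_mem, Set.indicator_of_notMem, hω]
      have hXint : Integrable (fun ω => f ω * Set.indicator A (fun _ => (1:ℝ)) (F ω)) P := by
        refine aux_integrable (hf.mul hindm) (C := c) fun ω => ?_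
        by_cases hω : F ω ∈ A <;>
          simp [Set.indicator_of_mem, Set.indicator_of_notMem, hω, hfabs ω, abs_of_nonneg, hc0]
      calc ∫ ω in s, f ω * Set.indicator A (fun _ => (1:ℝ)) (F ω) ∂P
          = ∫ ω in s, (P[fun ω => f ω * Set.indicator A (fun _ => (1:ℝ)) (F ω)|m]) ω ∂P :=
            (setIntegral_condExp hm hXint hs).symm
        _ = ∫ ω in s, (P[f|m]) ω *
              (P[fun ω' => Set.indicator A (fun _ => (1:ℝ)) (F ω')|m]) ω ∂P := by
            refine integral_congr_ae (ae_restrict_of_ae ?_)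
            filter_upwards [hbox A hA] with ω hω
            exact hω
        _ = ∫ ω in s, (P[f|m]) ω * Set.indicator A (fun _ => (1:ℝ)) (F ω) ∂P :=
            aux_setIntegral_mul_condexp hm stronglyMeasurable_condExp hEf_bd' hind_int hs
    -- equality of the two measures
    haveI i1 : IsFiniteMeasure (auxMeas P s F f) :=
      aux_fin hF s hf (Eventually.of_forall hfc)
    haveI i2 : IsFiniteMeasure (auxMeas P s F (P[f|m])) := by
      refine aux_fin hF s hEf_meas (c := c) ?_
      filter_upwards [hEf_bd] with ω hω
      exact (le_abs_self _).trans hω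
    have hρeq : auxMeas P s F f = auxMeas P s F (P[f|m]) := by
      refine MeasureTheory.ext_of_generate_finite C hC_gen hC_pi (fun A hA => ?_) ?_
      · rw [aux_measC hF hf (Eventually.of_forall hf0) hf_int (hAmeas A hA),
          aux_measC hF hEf_meas hEf_nonneg integrable_condExp (hAmeas A hA), hsetbox A hA]
      · rw [aux_measC hF hf (Eventually.of_forall hf0) hf_int (hAmeas _ hC_univ),
          aux_measC hF hEf_meas hEf_nonneg integrable_condExp (hAmeas _ hC_univ),
          hsetbox _ hC_univ]
    calc ∫ ω in s, f ω * g (F ω) ∂P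
        = ∫ x, g x ∂(auxMeas P s F f) :=
          (aux_compute hF hf (Eventually.of_forall hf0) hg).symm
      _ = ∫ x, g x ∂(auxMeas P s F (P[f|m])) := by rw [hρeq]
      _ = ∫ ω in s, (P[f|m]) ω * g (F ω) ∂P :=
          aux_compute hF hEf_meas hEf_nonneg hg
  -- conclude via characterization of conditional expectation
  refine (ae_eq_condExp_of_forall_setIntegral_eq hm ?_ ?_ ?_ ?_).symm
  · refine aux_integrable (hf.mul hgF_meas) (C := c * cg) fun ω => ?_
    rw [abs_mul]
    exact mul_le_mul (hfabs ω) (hgb _) (abs_nonneg _) hc0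
  · intro s _ _
    have hri : Integrable (fun ω => (P[f|m]) ω * (P[fun ω' => g (F ω')|m]) ω) P :=
      Integrable.bdd_mul (μ := P) (c := c) integrable_condExp hEf_asm hEf_bd'
    exact hri.restrict
  · intro s hs _
    rw [aux_setIntegral_mul_condexp hm stronglyMeasurable_condExp hEf_bd' hgF_int hs]
    exact (hmain s hs).symm
  · exact (stronglyMeasurable_condExp.mul stronglyMeasurable_condExp).aestronglyMeasurable

end AuxLemmas


/-- **Sufficient condition for mutual conditional independence** (Lemma A.6).
A finite family `(Y_i)` of random elements of a Polish space is mutually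
conditionally independent given a sub-σ-algebra `m` if and only if each `Y_j` is
conditionally independent of the vector of the remaining variables given `m`. -/
theorem mutual_cond_indep_iff_each
    {Ω 𝒴 : Type*} [mΩ : MeasurableSpace Ω]
    [TopologicalSpace 𝒴] [PolishSpace 𝒴] [MeasurableSpace 𝒴] [BorelSpace 𝒴]
    (P : Measure Ω) [IsProbabilityMeasure P]
    (m : MeasurableSpace Ω) (hm : m ≤ mΩ)
    (k : ℕ) (Y : Fin k → Ω → 𝒴) (hY : ∀ i, Measurable[mΩ] (Y i)) :
    iCondIndepGiven P m Y ↔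
      ∀ j : Fin k,
        CondIndepPair P m (Y j) (fun ω => fun i : {i : Fin k // i ≠ j} => Y i ω) := by
  classical
  constructor
  · -- mutual conditional independence implies each pairwise statement
    intro hM j
    intro φ g hφ hg hφB hgB
    obtain ⟨Cφ, hCφ⟩ := hφB
    obtain ⟨Cg0, hCg0⟩ := hgB
    have hCg : ∀ x, |g x| ≤ max Cg0 0 := fun x => (hCg0 x).trans (le_max_left _ _)
    set V : Ω → ({i : Fin k // i ≠ j} → 𝒴) := fun ω => fun i : {i : Fin k // i ≠ j} => Y i ω
      with hVdef
    have hVmeas : Measurable[mΩ] V :=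
      aux_meas_pi (fun i : {i : Fin k // i ≠ j} => Y i) fun i => hY i
    set Cb : Set (Set ({i : Fin k // i ≠ j} → 𝒴)) :=
      Set.pi Set.univ '' Set.pi Set.univ (fun _ => {s : Set 𝒴 | MeasurableSet s}) with hCbdef
    have hCb_pi : IsPiSystem Cb := isPiSystem_pi
    have hCb_gen : (inferInstance : MeasurableSpace ({i : Fin k // i ≠ j} → 𝒴))
        = MeasurableSpace.generateFrom Cb := generateFrom_pi.symm
    have hCb_univ : Set.univ ∈ Cb :=
      ⟨fun _ => Set.univ, fun i _ => MeasurableSet.univ, by simp⟩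
    -- the box identity, for an arbitrary bounded measurable function of `Y j`
    have hbox : ∀ f' : 𝒴 → ℝ, Measurable f' → IsBdd f' → ∀ A ∈ Cb,
        P[fun ω => f' (Y j ω) * Set.indicator A (fun _ => (1:ℝ)) (V ω)|m]
          =ᵐ[P] fun ω => (P[fun ω' => f' (Y j ω')|m]) ω *
            (P[fun ω' => Set.indicator A (fun _ => (1:ℝ)) (V ω')|m]) ω := by
      rintro f' hf'm hf'B A ⟨t, ht, rfl⟩
      have hind_meas : ∀ i : {i : Fin k // i ≠ j},
          Measurable (Set.indicator (t i) (fun _ => (1:ℝ))) :=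
        fun i => measurable_const.indicator (ht i (Set.mem_univ i))
      set G : Fin k → 𝒴 → ℝ :=
        fun i => if h : i = j then f' else Set.indicator (t ⟨i, h⟩) (fun _ => 1) with hGdef
      set G1 : Fin k → 𝒴 → ℝ :=
        fun i => if h : i = j then (fun _ => 1) else Set.indicator (t ⟨i, h⟩) (fun _ => 1)
        with hG1def
      have hGj : G j = f' := by simp [hGdef]
      have hG1j : G1 j = fun _ => 1 := by simp [hG1def]
      have hGne : ∀ (i : Fin k) (h : i ≠ j), G i = Set.indicator (t ⟨i, h⟩) (fun _ => 1) := by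
        intro i h; simp [hGdef, h]
      have hG1ne : ∀ (i : Fin k) (h : i ≠ j), G1 i = G i := by
        intro i h; simp [hGdef, hG1def, h]
      have hindBdd : ∀ (s : Set 𝒴) (x : 𝒴), |Set.indicator s (fun _ => (1:ℝ)) x| ≤ 1 := by
        intro s x
        by_cases hx : x ∈ s <;> simp [Set.indicator_of_mem, Set.indicator_of_notMem, hx]
      have hGm : ∀ i, Measurable (G i) := by
        intro i
        by_cases h : i = j
        · subst h; rw [hGj]; exact hf'm
        · rw [hGne i h]; exact hind_meas _
      have hG1m : ∀ i, Measurable (G1 i) := by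
        intro i
        by_cases h : i = j
        · subst h; rw [hG1j]; exact measurable_const
        · rw [hG1ne i h]; exact hGm i
      have hGB : ∀ i, IsBdd (G i) := by
        intro i
        by_cases h : i = j
        · subst h; rw [hGj]; exact hf'B
        · rw [hGne i h]; exact ⟨1, hindBdd _⟩
      have hG1B : ∀ i, IsBdd (G1 i) := by
        intro i
        by_cases h : i = j
        · subst h; rw [hG1j]; exact ⟨1, by simp⟩
        · rw [hG1ne i h]; exact hGB i
      have herase : ∀ ω, (∏ i ∈ Finset.univ.erase j, G i (Y i ω))
          = Set.indicator (Set.pi Set.univ t) (fun _ => (1:ℝ)) (V ω) := by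
        intro ω
        rw [aux_indicator_pi_prod]
        rw [Finset.prod_subtype (Finset.univ.erase j) (p := fun i : Fin k => i ≠ j)
          (by intro x; simp [Finset.mem_erase]) (fun i => G i (Y i ω))]
        exact Finset.prod_congr rfl fun i _ => by rw [hGne i.val i.prop]
      have hprod : (fun ω => ∏ i, G i (Y i ω))
          = fun ω => f' (Y j ω)
              * Set.indicator (Set.pi Set.univ t) (fun _ => (1:ℝ)) (V ω) := by
        funext ω
        rw [← Finset.mul_prod_erase Finset.univ _ (Finset.mem_univ j), hGj, herase ω]
      have hprod1 : (fun ω => ∏ i, G1 i (Y i ω))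
          = fun ω => Set.indicator (Set.pi Set.univ t) (fun _ => (1:ℝ)) (V ω) := by
        funext ω
        rw [← Finset.mul_prod_erase Finset.univ _ (Finset.mem_univ j), hG1j]
        rw [show (∏ i ∈ Finset.univ.erase j, G1 i (Y i ω))
            = ∏ i ∈ Finset.univ.erase j, G i (Y i ω) from
          Finset.prod_congr rfl fun i hi => by rw [hG1ne i (Finset.mem_erase.mp hi).1]]
        rw [herase ω]
        exact one_mul _
      have h1 := hM G hGm hGB
      have h2 := hM G1 hG1m hG1B
      rw [hprod] at h1
      rw [hprod1] at h2
      have e1 : (fun ω' => G1 j (Y j ω')) = fun _ : Ω => (1:ℝ) := by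
        funext ω'; rw [hG1j]
      have e2 : (fun ω' => G j (Y j ω')) = fun ω' => f' (Y j ω') := by
        funext ω'; rw [hGj]
      have heraseE : ∀ ω, (∏ i ∈ Finset.univ.erase j, (P[fun ω' => G1 i (Y i ω')|m]) ω)
          = ∏ i ∈ Finset.univ.erase j, (P[fun ω' => G i (Y i ω')|m]) ω :=
        fun ω => Finset.prod_congr rfl fun i hi => by rw [hG1ne i (Finset.mem_erase.mp hi).1]
      have hh : ∀ ω, (∏ i, (P[fun ω' => G1 i (Y i ω')|m]) ω)
          = ∏ i ∈ Finset.univ.erase j, (P[fun ω' => G i (Y i ω')|m]) ω := by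
        intro ω
        rw [← Finset.mul_prod_erase Finset.univ _ (Finset.mem_univ j), e1,
          condExp_const hm (1:ℝ)]
        simpa using heraseE ω
      refine h1.trans ?_
      filter_upwards [h2] with ω hω2
      rw [hω2, hh ω, ← Finset.mul_prod_erase Finset.univ _ (Finset.mem_univ j), e2]
    -- split φ into positive and negative parts and apply the key lemma
    set φp : 𝒴 → ℝ := fun y => max (φ y) 0 with hφpdef
    set φn : 𝒴 → ℝ := fun y => max (-(φ y)) 0 with hφndef
    have hφpm : Measurable φp := hφ.max measurable_const
    have hφnm : Measurable φn := hφ.neg.max measurable_const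
    have hφpb : ∀ y, φp y ≤ max Cφ 0 :=
      fun y => max_le_max ((le_abs_self _).trans (hCφ y)) le_rfl
    have hφnb : ∀ y, φn y ≤ max Cφ 0 :=
      fun y => max_le_max ((neg_le_abs _).trans (hCφ y)) le_rfl
    have hφpB : IsBdd φp := ⟨max Cφ 0, fun y => by
      rw [abs_of_nonneg (le_max_right _ _)]; exact hφpb y⟩
    have hφnB : IsBdd φn := ⟨max Cφ 0, fun y => by
      rw [abs_of_nonneg (le_max_right _ _)]; exact hφnb y⟩
    have keyp : P[fun ω => φp (Y j ω) * g (V ω)|m]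
        =ᵐ[P] fun ω => (P[fun ω' => φp (Y j ω')|m]) ω * (P[fun ω' => g (V ω')|m]) ω :=
      aux_key hm hCb_pi hCb_gen hCb_univ hVmeas (hφpm.comp (hY j))
        (fun ω => le_max_right _ _) (fun ω => hφpb _) (hbox φp hφpm hφpB) hg hCg
    have keyn : P[fun ω => φn (Y j ω) * g (V ω)|m]
        =ᵐ[P] fun ω => (P[fun ω' => φn (Y j ω')|m]) ω * (P[fun ω' => g (V ω')|m]) ω :=
      aux_key hm hCb_pi hCb_gen hCb_univ hVmeas (hφnm.comp (hY j))
        (fun ω => le_max_right _ _) (fun ω => hφnb _) (hbox φn hφnm hφnB) hg hCg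
    have hgVm : Measurable[mΩ] fun ω => g (V ω) := hg.comp hVmeas
    have intp : Integrable (fun ω => φp (Y j ω) * g (V ω)) P := by
      refine aux_integrable ((hφpm.comp (hY j)).mul hgVm) (C := max Cφ 0 * max Cg0 0)
        fun ω => ?_
      rw [abs_mul]
      exact mul_le_mul (by rw [abs_of_nonneg (le_max_right _ _)]; exact hφpb _)
        (hCg _) (abs_nonneg _) (le_max_right _ _)
    have intn : Integrable (fun ω => φn (Y j ω) * g (V ω)) P := by
      refine aux_integrable ((hφnm.comp (hY j)).mul hgVm) (C := max Cφ 0 * max Cg0 0)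
        fun ω => ?_
      rw [abs_mul]
      exact mul_le_mul (by rw [abs_of_nonneg (le_max_right _ _)]; exact hφnb _)
        (hCg _) (abs_nonneg _) (le_max_right _ _)
    have intφp : Integrable (fun ω => φp (Y j ω)) P := by
      refine aux_integrable (hφpm.comp (hY j)) (C := max Cφ 0) fun ω => ?_
      rw [abs_of_nonneg (le_max_right _ _)]; exact hφpb _
    have intφn : Integrable (fun ω => φn (Y j ω)) P := by
      refine aux_integrable (hφnm.comp (hY j)) (C := max Cφ 0) fun ω => ?_
      rw [abs_of_nonneg (le_max_right _ _)]; exact hφnb _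
    have hfunsplit : (fun ω => φ (Y j ω) * g (V ω))
        = (fun ω => φp (Y j ω) * g (V ω)) - fun ω => φn (Y j ω) * g (V ω) := by
      funext ω
      simp only [Pi.sub_apply, hφpdef, hφndef]
      have hmax := aux_max_sub_max (φ (Y j ω))
      linear_combination (-(g (V ω))) * hmax
    have hφsplit : (fun ω => φ (Y j ω))
        = (fun ω => φp (Y j ω)) - fun ω => φn (Y j ω) := by
      funext ω
      simp only [Pi.sub_apply, hφpdef, hφndef]
      exact (aux_max_sub_max (φ (Y j ω))).symm
    have hEsub := condExp_sub (m := m) intp intn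
    have hEφ := condExp_sub (m := m) intφp intφn
    rw [hfunsplit, hφsplit]
    filter_upwards [hEsub, hEφ, keyp, keyn] with ω h1 h2 h3 h4
    rw [h1]
    simp only [Pi.sub_apply]
    rw [h3, h4, h2]
    simp only [Pi.sub_apply]
    ring
  · -- each pairwise statement implies mutual conditional independence
    intro h f hfm hfB
    have main : ∀ T : Finset (Fin k),
        P[fun ω => ∏ i ∈ T, f i (Y i ω)|m]
          =ᵐ[P] fun ω => ∏ i ∈ T, (P[fun ω' => f i (Y i ω')|m]) ω := by
      intro T
      induction T using Finset.induction_on with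
      | empty =>
        simp only [Finset.prod_empty]
        rw [condExp_const hm (1:ℝ)]
      | insert j T' hj ih =>
        set g : ({i : Fin k // i ≠ j} → 𝒴) → ℝ :=
          fun v => ∏ i ∈ T'.attach, f i.val (v ⟨i.val, fun he => hj (he ▸ i.prop)⟩) with hgdef
        have hgm : Measurable g :=
          Finset.measurable_prod _ fun i _ => (hfm i.val).comp (measurable_pi_apply _)
        have hgB : IsBdd g := aux_isBdd_prod _ _ fun i _ => (hfB i.val).imp fun C hC v => hC _
        have hgV : ∀ ω, g (fun i : {i : Fin k // i ≠ j} => Y i ω) = ∏ i ∈ T', f i (Y i ω) := by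
          intro ω
          simp only [hgdef]
          exact Finset.prod_attach T' fun i => f i (Y i ω)
        have hstep := h j (f j) g (hfm j) hgm (hfB j) hgB
        have e1 : (fun ω => ∏ i ∈ insert j T', f i (Y i ω))
            = fun ω => f j (Y j ω) * g (fun i : {i : Fin k // i ≠ j} => Y i ω) := by
          funext ω
          rw [Finset.prod_insert hj, hgV ω]
        have e2 : (fun ω => g (fun i : {i : Fin k // i ≠ j} => Y i ω))
            = fun ω => ∏ i ∈ T', f i (Y i ω) := funext fun ω => hgV ω
        rw [e1]
        refine hstep.trans ?_
        rw [e2]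
        filter_upwards [ih] with ω hω
        rw [hω, Finset.prod_insert hj]
    exact main Finset.univ
end
end

section
/- Joint exchangeability is preserved by adding conditionally independent Bernoulli edges (Lemma A.9 / Addbernexch): Let X = (X_i)_{i=1}^n be a random vector with entries in a Polish space 𝒳 and Y = (Y_{ij})_{i,j=1}^n a random matrix with entries in a Polish space 𝒴 such that (X, Y) is jointly exchangeable. Let {B_{ij}}_{1≤i≤j≤n} be {0,1}-valued random variables that are mutually conditionally independent given σ(X,Y), extended symmetrically by B_{ji} := B_{ij}, and set P_{ij} := P(B_{ij} = 1 | σ(X,Y)). If the pair (X, (Y_{ij}, P_{ij})_{i,j=1}^n) is jointly exchangeable, then the pair (X, (Y_{ij}, B_{ij})_{i,j=1}^n) is jointly exchangeable. -/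
open MeasureTheory ProbabilityTheory Filter

noncomputable section

namespace AddBernAux

variable {n : ℕ}

/-- Sort a pair of indices. -/
def mmA (q : Fin n × Fin n) : {p : Fin n × Fin n // p.1 ≤ p.2} :=
  if h : q.1 ≤ q.2 then ⟨q, h⟩ else ⟨(q.2, q.1), le_of_not_ge h⟩

lemma mmA_eq_mmA_iff (q r : Fin n × Fin n) : mmA q = mmA r ↔ q = r ∨ q = r.swap := by
  obtain ⟨a, b⟩ := q; obtain ⟨c, d⟩ := r
  simp only [mmA]
  split_ifs with h1 h2 h2 <;>
    simp_all [Subtype.ext_iff, Prod.ext_iff, Fin.le_def, Fin.ext_iff] <;> omega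

lemma mmA_self (p : {p : Fin n × Fin n // p.1 ≤ p.2}) : mmA p.1 = p := by
  simp [mmA, p.2]

lemma mmA_eq_iff (q : Fin n × Fin n) (p : {p : Fin n × Fin n // p.1 ≤ p.2}) :
    mmA q = p ↔ q = p.1 ∨ q = p.1.swap := by
  rw [← mmA_self p, mmA_eq_mmA_iff, mmA_self]

lemma indicator_mem01 {α : Type*} (s : Set α) (x : α) :
    s.indicator (fun _ => (1 : ℝ)) x = 0 ∨ s.indicator (fun _ => (1 : ℝ)) x = 1 := by
  by_cases h : x ∈ s <;> simp [h]

lemma indicator_nonneg' {α : Type*} (s : Set α) (x : α) :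
    0 ≤ s.indicator (fun _ => (1 : ℝ)) x := by
  rcases indicator_mem01 s x with h | h <;> rw [h] <;> norm_num

lemma indicator_le_one' {α : Type*} (s : Set α) (x : α) :
    s.indicator (fun _ => (1 : ℝ)) x ≤ 1 := by
  rcases indicator_mem01 s x with h | h <;> rw [h] <;> norm_num

lemma indicator_rect {E F : Type*} (s : Set E) (t : Set F) (z : E × F) :
    Set.indicator (s ×ˢ t) (fun _ => (1 : ℝ)) z
      = s.indicator (fun _ => (1 : ℝ)) z.1 * t.indicator (fun _ => (1 : ℝ)) z.2 := by
  by_cases h1 : z.1 ∈ s <;> by_cases h2 : z.2 ∈ t <;>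
    simp [Set.indicator, Set.mem_prod, h1, h2]

lemma indicator_pi {ι E : Type*} [Fintype ι] (u : ι → Set E) (m : ι → E) :
    Set.indicator (Set.univ.pi u) (fun _ => (1 : ℝ)) m
      = ∏ i, (u i).indicator (fun _ => (1 : ℝ)) (m i) := by
  by_cases h : m ∈ Set.univ.pi u
  · rw [Set.indicator_of_mem h]
    rw [Finset.prod_congr rfl
      (fun i _ => Set.indicator_of_mem (h i (Set.mem_univ i)) (fun _ => (1 : ℝ)))]
    simp
  · rw [Set.indicator_of_notMem h]
    simp only [Set.mem_pi, Set.mem_univ, forall_true_left, not_forall] at h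
    obtain ⟨i, hi⟩ := h
    exact (Finset.prod_eq_zero (Finset.mem_univ i)
      (by simpa using Set.indicator_of_notMem hi (fun _ => (1 : ℝ)))).symm

lemma indicator_one_preimage {α β : Type*} (f : α → β) (s : Set β) (x : α) :
    Set.indicator (f ⁻¹' s) (fun _ => (1 : ℝ)) x = s.indicator (fun _ => (1 : ℝ)) (f x) := by
  by_cases h : f x ∈ s <;> simp [Set.indicator, h]

lemma integrable_of_bdd {Ω : Type*} [MeasurableSpace Ω] (P : Measure Ω) [IsFiniteMeasure P]
    {f : Ω → ℝ} (hf : Measurable f) (C : ℝ) (h : ∀ ω, |f ω| ≤ C) : Integrable f P :=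
  ⟨hf.aestronglyMeasurable, HasFiniteIntegral.of_bounded (C := C) (ae_of_all _ h)⟩

lemma isCountablySpanning_of_univ_mem {α : Type*} {C : Set (Set α)} (h : Set.univ ∈ C) :
    IsCountablySpanning C :=
  ⟨fun _ => Set.univ, fun _ => h, Set.iUnion_const _⟩

/-- Conditional expectation of a function applied to a `{0,1}`-valued random variable. -/
lemma condexp_binary {Ω : Type*} {m mΩ : MeasurableSpace Ω} (hm : m ≤ mΩ)
    (P : Measure Ω) [IsProbabilityMeasure P] {B : Ω → ℝ} (hB : Measurable B)
    (h01 : ∀ ω, B ω = 0 ∨ B ω = 1) (f : ℝ → ℝ) :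
    P[(fun ω => f (B ω)) | m] =ᵐ[P] fun ω => f 0 + (f 1 - f 0) * (P[B | m]) ω := by
  have hBint : Integrable B P := by
    refine ⟨hB.aestronglyMeasurable, HasFiniteIntegral.of_bounded (C := 1) (ae_of_all _ ?_)⟩
    intro ω; rcases h01 ω with h | h <;> simp [h]
  have hfun : (fun ω => f (B ω)) = (fun _ => f 0) + (f 1 - f 0) • B := by
    funext ω
    rcases h01 ω with h | h <;> simp [h, Pi.add_apply, Pi.smul_apply, smul_eq_mul] <;> ring
  rw [hfun]
  refine (condExp_add (integrable_const _) (hBint.smul _) m).trans ?_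
  rw [condExp_const hm]
  filter_upwards [condExp_smul (μ := P) (m := m) (f 1 - f 0) B] with ω hω2
  simp only [Pi.add_apply, hω2, Pi.smul_apply, smul_eq_mul]


/-- Product over the fiber of the sorted-pair map of indicator functions. -/
def gA (T : Fin n → Fin n → Set ℝ) (τ : Fin n → Fin n)
    (p : {p : Fin n × Fin n // p.1 ≤ p.2}) (x : ℝ) : ℝ :=
  ∏ q ∈ Finset.univ.filter (fun q : Fin n × Fin n => mmA (τ q.1, τ q.2) = p),
    (T q.1 q.2).indicator (fun _ => (1 : ℝ)) x

lemma gA_measurable (T : Fin n → Fin n → Set ℝ) (hT : ∀ i j, MeasurableSet (T i j))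
    (τ : Fin n → Fin n) (p : {p : Fin n × Fin n // p.1 ≤ p.2}) : Measurable (gA T τ p) :=
  Finset.measurable_prod _ fun q _ => measurable_const.indicator (hT q.1 q.2)

lemma gA_nonneg (T : Fin n → Fin n → Set ℝ) (τ : Fin n → Fin n)
    (p : {p : Fin n × Fin n // p.1 ≤ p.2}) (x : ℝ) : 0 ≤ gA T τ p x :=
  Finset.prod_nonneg fun q _ => indicator_nonneg' _ _

lemma gA_le_one (T : Fin n → Fin n → Set ℝ) (τ : Fin n → Fin n)
    (p : {p : Fin n × Fin n // p.1 ≤ p.2}) (x : ℝ) : gA T τ p x ≤ 1 :=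
  Finset.prod_le_one (fun q _ => indicator_nonneg' _ _) (fun q _ => indicator_le_one' _ _)

/-- The function of the conditional probabilities arising from integrating out the
Bernoulli variables. -/
def PsiA {Y : Type*} (T : Fin n → Fin n → Set ℝ) (m : Fin n → Fin n → Y × ℝ) : ℝ :=
  ∏ p : {p : Fin n × Fin n // p.1 ≤ p.2},
    (gA T id p 0 + (gA T id p 1 - gA T id p 0) * (m p.1.1 p.1.2).2)

lemma measurable_PsiA {Y : Type*} [MeasurableSpace Y] (T : Fin n → Fin n → Set ℝ) :
    Measurable (PsiA (Y := Y) (n := n) T) := by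
  refine Finset.measurable_prod _ fun p _ => ?_
  exact measurable_const.add (measurable_const.mul
    (((measurable_pi_apply p.1.2).comp (measurable_pi_apply p.1.1)).snd))

/-- The test function whose integral against the law of `(X,(Y,Pr))` computes the
probability of a box event for `(X,(Y,B))`. -/
def ThetaA {X Y : Type*} (A : Set (Fin n → X)) (S : Fin n → Fin n → Set Y)
    (T : Fin n → Fin n → Set ℝ) (z : (Fin n → X) × (Fin n → Fin n → Y × ℝ)) : ℝ :=
  (A.indicator (fun _ => (1 : ℝ)) z.1 *
    ∏ i, ∏ j, (S i j).indicator (fun _ => (1 : ℝ)) (z.2 i j).1) * PsiA T z.2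

lemma measurable_ThetaA {X Y : Type*} [MeasurableSpace X] [MeasurableSpace Y]
    {A : Set (Fin n → X)} {S : Fin n → Fin n → Set Y} {T : Fin n → Fin n → Set ℝ}
    (hA : MeasurableSet A) (hS : ∀ i j, MeasurableSet (S i j)) :
    Measurable (ThetaA A S T) := by
  refine (((measurable_const.indicator hA).comp measurable_fst).mul ?_).mul
    ((measurable_PsiA T).comp measurable_snd)
  refine Finset.measurable_prod _ fun i _ => Finset.measurable_prod _ fun j _ => ?_
  exact (measurable_const.indicator (hS i j)).comp
    (((measurable_pi_apply j).comp ((measurable_pi_apply i).comp measurable_snd)).fst)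

lemma eA_bijective (σ : Equiv.Perm (Fin n)) :
    Function.Bijective
      (fun p : {p : Fin n × Fin n // p.1 ≤ p.2} => mmA (σ p.1.1, σ p.1.2)) := by
  rw [← Finite.injective_iff_bijective]
  rintro ⟨⟨a, b⟩, hab⟩ ⟨⟨c, d⟩, hcd⟩ h
  rw [mmA_eq_mmA_iff] at h
  simp only [Prod.swap_prod_mk, Prod.mk.injEq, EmbeddingLike.apply_eq_iff_eq] at h
  simp only [Subtype.mk.injEq, Prod.mk.injEq]
  simp only [Fin.le_def] at hab hcd
  simp only [Fin.ext_iff] at h ⊢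
  omega

lemma fiber_eq (σ : Equiv.Perm (Fin n)) (p : {p : Fin n × Fin n // p.1 ≤ p.2}) :
    (Finset.univ.filter fun q : Fin n × Fin n => mmA (σ q.1, σ q.2) = mmA (σ p.1.1, σ p.1.2))
      = Finset.univ.filter fun q : Fin n × Fin n => mmA (id q.1, id q.2) = p := by
  ext q
  simp only [Finset.mem_filter, Finset.mem_univ, true_and, mmA_eq_mmA_iff, id_eq]
  have : mmA (q.1, q.2) = p ↔ (q.1, q.2) = p.1 ∨ (q.1, q.2) = p.1.swap := mmA_eq_iff _ _
  rw [this]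
  rcases p with ⟨⟨a, b⟩, hab⟩
  simp only [Prod.swap_prod_mk, Prod.mk.injEq, EmbeddingLike.apply_eq_iff_eq]

lemma gA_comp (T : Fin n → Fin n → Set ℝ) (σ : Equiv.Perm (Fin n))
    (p : {p : Fin n × Fin n // p.1 ≤ p.2}) :
    gA T (⇑σ) (mmA (σ p.1.1, σ p.1.2)) = gA T id p := by
  funext x
  unfold gA
  rw [fiber_eq]

end AddBernAux

open CoevolveNet MeasureTheory ProbabilityTheory Filter AddBernAux

/-- **Joint exchangeability is preserved by adding conditionally independent
Bernoulli edges** (Lemma A.9).  Let `(X,Y)` be jointly exchangeable, let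
`{B_{ij}}_{i ≤ j}` be `{0,1}`-valued random variables, mutually conditionally
independent given `σ(X,Y)`, extended symmetrically, with conditional success
probabilities `P_{ij}`.  If `(X,(Y_{ij},P_{ij}))` is jointly exchangeable, then so
is `(X,(Y_{ij},B_{ij}))`. -/
theorem jointlyExch_add_bernoulli
    {Ω 𝒳 𝒴 : Type*} [MeasurableSpace Ω]
    [TopologicalSpace 𝒳] [PolishSpace 𝒳] [MeasurableSpace 𝒳] [BorelSpace 𝒳]
    [TopologicalSpace 𝒴] [PolishSpace 𝒴] [MeasurableSpace 𝒴] [BorelSpace 𝒴]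
    (P : Measure Ω) [IsProbabilityMeasure P] (n : ℕ)
    (X : Fin n → Ω → 𝒳) (Y : Fin n → Fin n → Ω → 𝒴)
    (B : Fin n → Fin n → Ω → ℝ) (Pr : Fin n → Fin n → Ω → ℝ)
    (hX : ∀ i, Measurable (X i)) (hY : ∀ i j, Measurable (Y i j))
    (hB : ∀ i j, Measurable (B i j)) (hPr : ∀ i j, Measurable (Pr i j))
    (hexchXY : JointlyExch P X Y)
    (hB01 : ∀ i j ω, B i j ω = 0 ∨ B i j ω = 1)
    (hBsymm : ∀ i j ω, B j i ω = B i j ω)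
    (hCI : iCondIndepGiven P
      (MeasurableSpace.comap (fun ω => (fun i => X i ω, fun i j => Y i j ω)) inferInstance)
      (fun p : {p : Fin n × Fin n // p.1 ≤ p.2} => B p.1.1 p.1.2))
    (hPrCond : ∀ i j, Pr i j =ᵐ[P]
      P[B i j |
        MeasurableSpace.comap (fun ω => (fun i => X i ω, fun i j => Y i j ω)) inferInstance])
    (hexchXYP : JointlyExch P X (fun i j ω => (Y i j ω, Pr i j ω))) :
    JointlyExch P X (fun i j ω => (Y i j ω, B i j ω)) := by
  classical
  have hZmeas : Measurable (fun ω => ((fun i => X i ω : Fin n → 𝒳),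
      (fun i j => Y i j ω : Fin n → Fin n → 𝒴))) :=
    (measurable_pi_lambda _ fun i => hX i).prodMk
      (measurable_pi_lambda _ fun i => measurable_pi_lambda _ fun j => hY i j)
  have hGle : (MeasurableSpace.comap (fun ω => (fun i => X i ω, fun i j => Y i j ω)) inferInstance) ≤ (inferInstance : MeasurableSpace Ω) := hZmeas.comap_le
  have hPrSymm : ∀ᵐ ω ∂P, ∀ i j, Pr j i ω = Pr i j ω := by
    rw [ae_all_iff]
    intro i
    rw [ae_all_iff]
    intro j
    have h2 : B j i = B i j := funext fun ω => hBsymm i j ω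
    filter_upwards [hPrCond j i, hPrCond i j] with ω hω1 hω3
    rw [hω1, h2, ← hω3]
  -- Key computation for boxes
  have key : ∀ (σ : Equiv.Perm (Fin n)) (A : Set (Fin n → 𝒳))
      (S : Fin n → Fin n → Set 𝒴) (T : Fin n → Fin n → Set ℝ),
      MeasurableSet A → (∀ i j, MeasurableSet (S i j)) → (∀ i j, MeasurableSet (T i j)) →
      (P.map (fun ω => ((fun i => X (σ i) ω : Fin n → 𝒳),
          (fun i j => (Y (σ i) (σ j) ω, B (σ i) (σ j) ω) : Fin n → Fin n → 𝒴 × ℝ))))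
          (A ×ˢ Set.univ.pi fun i => Set.univ.pi fun j => S i j ×ˢ T i j)
        = ENNReal.ofReal (∫ z, ThetaA A S T z
            ∂(P.map (fun ω => ((fun i => X i ω : Fin n → 𝒳),
              (fun i j => (Y i j ω, Pr i j ω) : Fin n → Fin n → 𝒴 × ℝ))))) := by
    intro σ A S T hA hS hT
    have hFσ : Measurable (fun ω => ((fun i => X (σ i) ω : Fin n → 𝒳),
        (fun i j => (Y (σ i) (σ j) ω, B (σ i) (σ j) ω) : Fin n → Fin n → 𝒴 × ℝ))) :=
      (measurable_pi_lambda _ fun i => hX (σ i)).prodMk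
        (measurable_pi_lambda _ fun i => measurable_pi_lambda _ fun j =>
          (hY (σ i) (σ j)).prodMk (hB (σ i) (σ j)))
    have hbox : MeasurableSet (A ×ˢ Set.univ.pi fun i => Set.univ.pi fun j => S i j ×ˢ T i j) :=
      hA.prod (MeasurableSet.univ_pi fun i => MeasurableSet.univ_pi fun j =>
        (hS i j).prod (hT i j))
    set g : Ω → ℝ := fun ω => A.indicator (fun _ => (1:ℝ)) (fun i => X (σ i) ω) *
      ∏ i, ∏ j, (S i j).indicator (fun _ => (1:ℝ)) (Y (σ i) (σ j) ω) with hgdef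
    set W : Ω → ℝ := fun ω => ∏ p : {p : Fin n × Fin n // p.1 ≤ p.2},
      gA T (⇑σ) p (B p.1.1 p.1.2 ω) with hWdef
    set Φ : Ω → ℝ := fun ω => ∏ p : {p : Fin n × Fin n // p.1 ≤ p.2},
      (gA T (⇑σ) p 0 + (gA T (⇑σ) p 1 - gA T (⇑σ) p 0) * Pr p.1.1 p.1.2 ω) with hPhidef
    have hgmeas : Measurable g := by
      rw [hgdef]
      refine ((measurable_const.indicator hA).comp
        (measurable_pi_lambda _ fun i => hX (σ i))).mul ?_
      exact Finset.measurable_prod _ fun i _ => Finset.measurable_prod _ fun j _ =>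
        (measurable_const.indicator (hS i j)).comp (hY (σ i) (σ j))
    have hWmeas : Measurable W := by
      rw [hWdef]
      exact Finset.measurable_prod _ fun p _ =>
        (gA_measurable T hT (⇑σ) p).comp (hB p.1.1 p.1.2)
    have hg0 : ∀ ω, 0 ≤ g ω := fun ω => mul_nonneg (indicator_nonneg' _ _)
      (Finset.prod_nonneg fun i _ => Finset.prod_nonneg fun j _ => indicator_nonneg' _ _)
    have hg1 : ∀ ω, g ω ≤ 1 := by
      intro ω
      have h2 : (∏ i, ∏ j, (S i j).indicator (fun _ => (1:ℝ)) (Y (σ i) (σ j) ω)) ≤ 1 :=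
        Finset.prod_le_one (fun i _ => Finset.prod_nonneg fun j _ => indicator_nonneg' _ _)
          (fun i _ => Finset.prod_le_one (fun j _ => indicator_nonneg' _ _)
            (fun j _ => indicator_le_one' _ _))
      have h3 : (0:ℝ) ≤ ∏ i, ∏ j, (S i j).indicator (fun _ => (1:ℝ)) (Y (σ i) (σ j) ω) :=
        Finset.prod_nonneg fun i _ => Finset.prod_nonneg fun j _ => indicator_nonneg' _ _
      have h1 := indicator_le_one' A (fun i => X (σ i) ω)
      exact mul_le_one₀ h1 h3 h2
    have hW0 : ∀ ω, 0 ≤ W ω := fun ω => Finset.prod_nonneg fun p _ => gA_nonneg T _ p _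
    have hW1 : ∀ ω, W ω ≤ 1 := fun ω =>
      Finset.prod_le_one (fun p _ => gA_nonneg T _ p _) (fun p _ => gA_le_one T _ p _)
    have hWint : Integrable W P := by
      refine ⟨hWmeas.aestronglyMeasurable,
        HasFiniteIntegral.of_bounded (C := 1) (ae_of_all _ fun ω => ?_)⟩
      rw [Real.norm_eq_abs, abs_of_nonneg (hW0 ω)]; exact hW1 ω
    have hgWint : Integrable (g * W) P := by
      refine ⟨(hgmeas.mul hWmeas).aestronglyMeasurable,
        HasFiniteIntegral.of_bounded (C := 1) (ae_of_all _ fun ω => ?_)⟩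
      rw [Pi.mul_apply, Real.norm_eq_abs, abs_of_nonneg (mul_nonneg (hg0 ω) (hW0 ω))]
      nlinarith [hg0 ω, hg1 ω, hW0 ω, hW1 ω]
    have hgG : StronglyMeasurable[(MeasurableSpace.comap (fun ω => (fun i => X i ω, fun i j => Y i j ω)) inferInstance)] g := by
      have hZG : Measurable[(MeasurableSpace.comap (fun ω => (fun i => X i ω, fun i j => Y i j ω)) inferInstance)] (fun ω => ((fun i => X i ω : Fin n → 𝒳),
          (fun i j => Y i j ω : Fin n → Fin n → 𝒴))) := Measurable.of_comap_le le_rfl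
      have hhm : Measurable (fun z : (Fin n → 𝒳) × (Fin n → Fin n → 𝒴) =>
          A.indicator (fun _ => (1:ℝ)) (fun i => z.1 (σ i)) *
          ∏ i, ∏ j, (S i j).indicator (fun _ => (1:ℝ)) (z.2 (σ i) (σ j))) := by
        refine ((measurable_const.indicator hA).comp
          (measurable_pi_lambda _ fun i =>
            (measurable_pi_apply (σ i)).comp measurable_fst)).mul ?_
        refine Finset.measurable_prod _ fun i _ => Finset.measurable_prod _ fun j _ => ?_
        exact (measurable_const.indicator (hS i j)).comp
          ((measurable_pi_apply (σ j)).comp ((measurable_pi_apply (σ i)).comp measurable_snd))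
      exact (hhm.comp hZG).stronglyMeasurable
    have hcondW : P[W | (MeasurableSpace.comap (fun ω => (fun i => X i ω, fun i j => Y i j ω)) inferInstance)] =ᵐ[P] Φ := by
      have h1 := hCI (fun p => gA T (⇑σ) p) (fun p => gA_measurable T hT (⇑σ) p)
        (fun p => ⟨1, fun x => by
          rw [abs_of_nonneg (gA_nonneg T _ p x)]; exact gA_le_one T _ p x⟩)
      have h2 : ∀ p : {p : Fin n × Fin n // p.1 ≤ p.2},
          P[(fun ω' => gA T (⇑σ) p (B p.1.1 p.1.2 ω')) | (MeasurableSpace.comap (fun ω => (fun i => X i ω, fun i j => Y i j ω)) inferInstance)] =ᵐ[P]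
            fun ω => gA T (⇑σ) p 0 + (gA T (⇑σ) p 1 - gA T (⇑σ) p 0) * Pr p.1.1 p.1.2 ω := by
        intro p
        refine (condexp_binary hGle P (hB p.1.1 p.1.2) (hB01 p.1.1 p.1.2) (gA T (⇑σ) p)).trans ?_
        filter_upwards [hPrCond p.1.1 p.1.2] with ω hω
        rw [hω]
      have h3 : ∀ᵐ ω ∂P, ∀ p : {p : Fin n × Fin n // p.1 ≤ p.2},
          (P[(fun ω' => gA T (⇑σ) p (B p.1.1 p.1.2 ω')) | (MeasurableSpace.comap (fun ω => (fun i => X i ω, fun i j => Y i j ω)) inferInstance)]) ω =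
            gA T (⇑σ) p 0 + (gA T (⇑σ) p 1 - gA T (⇑σ) p 0) * Pr p.1.1 p.1.2 ω :=
        ae_all_iff.mpr h2
      refine h1.trans ?_
      filter_upwards [h3] with ω hω
      rw [hPhidef]
      exact Finset.prod_congr rfl fun p _ => hω p
    have hmain : ∫ ω, (g * W) ω ∂P = ∫ ω, g ω * Φ ω ∂P := by
      rw [← integral_condExp hGle (f := g * W)]
      refine integral_congr_ae ?_
      refine (condExp_mul_of_stronglyMeasurable_left hgG hgWint hWint).trans ?_
      filter_upwards [hcondW] with ω hω
      rw [Pi.mul_apply, hω]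
    have hexp : ∀ ω : Ω, Set.indicator
        (A ×ˢ Set.univ.pi fun i => Set.univ.pi fun j => S i j ×ˢ T i j) (fun _ => (1:ℝ))
        ((fun i => X (σ i) ω : Fin n → 𝒳),
          (fun i j => (Y (σ i) (σ j) ω, B (σ i) (σ j) ω) : Fin n → Fin n → 𝒴 × ℝ))
        = (g * W) ω := by
      intro ω
      rw [indicator_rect]
      rw [show (((fun i => X (σ i) ω : Fin n → 𝒳),
          (fun i j => (Y (σ i) (σ j) ω, B (σ i) (σ j) ω) : Fin n → Fin n → 𝒴 × ℝ))).1
        = (fun i => X (σ i) ω : Fin n → 𝒳) from rfl]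
      rw [show (((fun i => X (σ i) ω : Fin n → 𝒳),
          (fun i j => (Y (σ i) (σ j) ω, B (σ i) (σ j) ω) : Fin n → Fin n → 𝒴 × ℝ))).2
        = (fun i j => (Y (σ i) (σ j) ω, B (σ i) (σ j) ω) : Fin n → Fin n → 𝒴 × ℝ) from rfl]
      rw [indicator_pi]
      rw [Finset.prod_congr rfl fun i (_ : i ∈ Finset.univ) =>
        indicator_pi (fun j => S i j ×ˢ T i j) (fun j => (Y (σ i) (σ j) ω, B (σ i) (σ j) ω))]
      rw [Finset.prod_congr rfl fun i (_ : i ∈ Finset.univ) => Finset.prod_congr rfl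
        fun j (_ : j ∈ Finset.univ) =>
          indicator_rect (S i j) (T i j) (Y (σ i) (σ j) ω, B (σ i) (σ j) ω)]
      rw [Finset.prod_congr rfl fun i (_ : i ∈ Finset.univ) =>
        (Finset.prod_mul_distrib (s := Finset.univ)
          (f := fun j => (S i j).indicator (fun _ => (1:ℝ)) (Y (σ i) (σ j) ω))
          (g := fun j => (T i j).indicator (fun _ => (1:ℝ)) (B (σ i) (σ j) ω)))]
      rw [Finset.prod_mul_distrib]
      have hT' : (∏ i, ∏ j, (T i j).indicator (fun _ => (1:ℝ)) (B (σ i) (σ j) ω)) = W ω := by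
        rw [← Fintype.prod_prod_type']
        have hBmm : ∀ q : Fin n × Fin n,
            (T q.1 q.2).indicator (fun _ => (1:ℝ)) (B (σ q.1) (σ q.2) ω)
              = (T q.1 q.2).indicator (fun _ => (1:ℝ))
                  (B (mmA (σ q.1, σ q.2)).1.1 (mmA (σ q.1, σ q.2)).1.2 ω) := by
          intro q
          by_cases h : σ q.1 ≤ σ q.2
          · rw [show mmA (σ q.1, σ q.2) = ⟨(σ q.1, σ q.2), h⟩ from dif_pos h]
          · rw [show mmA (σ q.1, σ q.2) = ⟨(σ q.2, σ q.1), le_of_not_ge h⟩ from dif_neg h,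
              hBsymm (σ q.2) (σ q.1) ω]
        rw [Finset.prod_congr rfl fun q (_ : q ∈ Finset.univ) => hBmm q]
        rw [← Finset.prod_fiberwise_of_maps_to
          (g := fun q : Fin n × Fin n => mmA (σ q.1, σ q.2)) (t := Finset.univ)
          (fun q _ => Finset.mem_univ _)
          (fun q => (T q.1 q.2).indicator (fun _ => (1:ℝ))
            (B (mmA (σ q.1, σ q.2)).1.1 (mmA (σ q.1, σ q.2)).1.2 ω))]
        rw [hWdef]
        refine Finset.prod_congr rfl fun p _ => ?_
        rw [show gA T (⇑σ) p (B p.1.1 p.1.2 ω) = ∏ q ∈ Finset.univ.filter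
            (fun q : Fin n × Fin n => mmA (σ q.1, σ q.2) = p),
            (T q.1 q.2).indicator (fun _ => (1:ℝ)) (B p.1.1 p.1.2 ω) from rfl]
        refine Finset.prod_congr rfl fun q hq => ?_
        rw [(Finset.mem_filter.mp hq).2]
      rw [hT', Pi.mul_apply, hgdef]
      ring
    have hF'σ : Measurable (fun ω => ((fun i => X (σ i) ω : Fin n → 𝒳),
        (fun i j => (Y (σ i) (σ j) ω, Pr (σ i) (σ j) ω) : Fin n → Fin n → 𝒴 × ℝ))) :=
      (measurable_pi_lambda _ fun i => hX (σ i)).prodMk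
        (measurable_pi_lambda _ fun i => measurable_pi_lambda _ fun j =>
          (hY (σ i) (σ j)).prodMk (hPr (σ i) (σ j)))
    have hfinal : ∫ ω, g ω * Φ ω ∂P = ∫ z, ThetaA A S T z
        ∂(P.map (fun ω => ((fun i => X i ω : Fin n → 𝒳),
          (fun i j => (Y i j ω, Pr i j ω) : Fin n → Fin n → 𝒴 × ℝ)))) := by
      have hmapeq : P.map (fun ω => ((fun i => X (σ i) ω : Fin n → 𝒳),
          (fun i j => (Y (σ i) (σ j) ω, Pr (σ i) (σ j) ω) : Fin n → Fin n → 𝒴 × ℝ)))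
          = P.map (fun ω => ((fun i => X i ω : Fin n → 𝒳),
            (fun i j => (Y i j ω, Pr i j ω) : Fin n → Fin n → 𝒴 × ℝ))) := hexchXYP σ
      rw [← hmapeq]
      rw [integral_map hF'σ.aemeasurable (measurable_ThetaA hA hS).aestronglyMeasurable]
      refine integral_congr_ae ?_
      filter_upwards [hPrSymm] with ω hsym
      have hPrmm : ∀ p : {p : Fin n × Fin n // p.1 ≤ p.2},
          Pr (mmA (σ p.1.1, σ p.1.2)).1.1 (mmA (σ p.1.1, σ p.1.2)).1.2 ω
            = Pr (σ p.1.1) (σ p.1.2) ω := by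
        intro p
        by_cases h : σ p.1.1 ≤ σ p.1.2
        · rw [show mmA (σ p.1.1, σ p.1.2) = ⟨(σ p.1.1, σ p.1.2), h⟩ from dif_pos h]
        · rw [show mmA (σ p.1.1, σ p.1.2) = ⟨(σ p.1.2, σ p.1.1), le_of_not_ge h⟩ from dif_neg h]
          exact hsym _ _
      have hPsi : Φ ω = PsiA T (fun i j => (Y (σ i) (σ j) ω, Pr (σ i) (σ j) ω)) := by
        rw [hPhidef]
        refine (Fintype.prod_bijective
          (fun p : {p : Fin n × Fin n // p.1 ≤ p.2} => mmA (σ p.1.1, σ p.1.2))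
          (eA_bijective σ)
          (fun p => gA T id p 0 + (gA T id p 1 - gA T id p 0) *
            ((fun i j => (Y (σ i) (σ j) ω, Pr (σ i) (σ j) ω)) p.1.1 p.1.2).2)
          (fun p => gA T (⇑σ) p 0 + (gA T (⇑σ) p 1 - gA T (⇑σ) p 0) * Pr p.1.1 p.1.2 ω)
          ?_).symm
        intro p
        dsimp only
        rw [gA_comp T σ p, hPrmm p]
      show g ω * Φ ω = ThetaA A S T ((fun i => X (σ i) ω : Fin n → 𝒳),
        (fun i j => (Y (σ i) (σ j) ω, Pr (σ i) (σ j) ω) : Fin n → Fin n → 𝒴 × ℝ))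
      rw [hPsi, hgdef]
      rfl
    calc (P.map (fun ω => ((fun i => X (σ i) ω : Fin n → 𝒳),
          (fun i j => (Y (σ i) (σ j) ω, B (σ i) (σ j) ω) : Fin n → Fin n → 𝒴 × ℝ))))
          (A ×ˢ Set.univ.pi fun i => Set.univ.pi fun j => S i j ×ˢ T i j)
        = P ((fun ω => ((fun i => X (σ i) ω : Fin n → 𝒳),
            (fun i j => (Y (σ i) (σ j) ω, B (σ i) (σ j) ω) : Fin n → Fin n → 𝒴 × ℝ))) ⁻¹'
            (A ×ˢ Set.univ.pi fun i => Set.univ.pi fun j => S i j ×ˢ T i j)) :=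
          Measure.map_apply hFσ hbox
      _ = ENNReal.ofReal (∫ ω, (g * W) ω ∂P) := by
          rw [← ENNReal.ofReal_toReal (measure_ne_top P _)]
          congr 1
          rw [← measureReal_def, ← integral_indicator_one (hFσ hbox)]
          refine integral_congr_ae (ae_of_all _ fun ω => ?_)
          rw [Pi.one_def, indicator_one_preimage]
          exact hexp ω
      _ = ENNReal.ofReal (∫ ω, g ω * Φ ω ∂P) := by rw [hmain]
      _ = _ := by rw [hfinal]
  -- conclude by a π-system argument
  intro σ
  have hFσ : Measurable (fun ω => ((fun i => X (σ i) ω : Fin n → 𝒳),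
      (fun i j => (Y (σ i) (σ j) ω, B (σ i) (σ j) ω) : Fin n → Fin n → 𝒴 × ℝ))) :=
    (measurable_pi_lambda _ fun i => hX (σ i)).prodMk
      (measurable_pi_lambda _ fun i => measurable_pi_lambda _ fun j =>
        (hY (σ i) (σ j)).prodMk (hB (σ i) (σ j)))
  have hFid : Measurable (fun ω => ((fun i => X i ω : Fin n → 𝒳),
      (fun i j => (Y i j ω, B i j ω) : Fin n → Fin n → 𝒴 × ℝ))) :=
    (measurable_pi_lambda _ fun i => hX i).prodMk
      (measurable_pi_lambda _ fun i => measurable_pi_lambda _ fun j =>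
        (hY i j).prodMk (hB i j))
  have hμ : IsProbabilityMeasure (P.map (fun ω => ((fun i => X (σ i) ω : Fin n → 𝒳),
      (fun i j => (Y (σ i) (σ j) ω, B (σ i) (σ j) ω) : Fin n → Fin n → 𝒴 × ℝ)))) :=
    Measure.isProbabilityMeasure_map hFσ.aemeasurable
  have hν : IsProbabilityMeasure (P.map (fun ω => ((fun i => X i ω : Fin n → 𝒳),
      (fun i j => (Y i j ω, B i j ω) : Fin n → Fin n → 𝒴 × ℝ)))) :=
    Measure.isProbabilityMeasure_map hFid.aemeasurable
  have hrectuniv : (Set.univ : Set (𝒴 × ℝ)) ∈ Set.image2 (· ×ˢ ·)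
      {s : Set 𝒴 | MeasurableSet s} {t : Set ℝ | MeasurableSet t} :=
    ⟨Set.univ, show MeasurableSet (Set.univ : Set 𝒴) from MeasurableSet.univ, Set.univ,
      show MeasurableSet (Set.univ : Set ℝ) from MeasurableSet.univ, Set.univ_prod_univ⟩
  have hinneruniv : (Set.univ : Set (Fin n → 𝒴 × ℝ)) ∈ Set.pi Set.univ ''
      Set.pi Set.univ (fun _ : Fin n => Set.image2 (· ×ˢ ·)
        {s : Set 𝒴 | MeasurableSet s} {t : Set ℝ | MeasurableSet t}) :=
    ⟨fun _ => Set.univ, fun _ _ => hrectuniv, Set.pi_univ _⟩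
  refine ext_of_generate_finite
    (Set.image2 (· ×ˢ ·) {s : Set (Fin n → 𝒳) | MeasurableSet s}
      (Set.pi Set.univ '' Set.pi Set.univ fun _ : Fin n =>
        Set.pi Set.univ '' Set.pi Set.univ fun _ : Fin n =>
          Set.image2 (· ×ˢ ·) {s : Set 𝒴 | MeasurableSet s} {t : Set ℝ | MeasurableSet t}))
    ?_ ?_ ?_ ?_
  · refine (generateFrom_eq_prod MeasurableSpace.generateFrom_measurableSet ?_
      isCountablySpanning_measurableSet ?_).symm
    · exact generateFrom_eq_pi
        (fun i => generateFrom_eq_pi (fun j => generateFrom_prod)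
          (fun j => isCountablySpanning_of_univ_mem hrectuniv))
        (fun i => isCountablySpanning_of_univ_mem hinneruniv)
    · exact isCountablySpanning_of_univ_mem
        ⟨fun _ => Set.univ, fun _ _ => hinneruniv, Set.pi_univ _⟩
  · exact MeasurableSpace.isPiSystem_measurableSet.prod
      (IsPiSystem.pi fun i => IsPiSystem.pi fun j => isPiSystem_prod)
  · rintro s ⟨A, hA, t, ⟨u, hu, rfl⟩, rfl⟩
    choose v hv hvu using fun i => hu i (Set.mem_univ i)
    choose S hS T hT hST using fun i j => (hv i) j (Set.mem_univ j)
    have hu' : u = fun i => Set.pi Set.univ fun j => S i j ×ˢ T i j := by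
      funext i
      rw [← hvu i]
      exact congrArg (Set.pi Set.univ) (funext fun j => (hST i j).symm)
    rw [hu']
    have h1 := key σ A S T hA hS hT
    have h2 := key 1 A S T hA hS hT
    simp only [Equiv.Perm.coe_one, id_eq] at h2
    exact h1.trans h2.symm
  · rw [@measure_univ _ _ _ hμ, @measure_univ _ _ _ hν]
end
end

section
/- Exchangeability excluding 1 is preserved by adding conditionally independent Bernoulli marks (Lemma A.10 / lem::Addberexchexcl): Let (X, (Y_1,…,Y_n)) be an 𝒳 × 𝒴^n-valued random element that is exchangeable excluding 1. Let C : 𝒳×𝒴 → [0,1] be measurable, and let {B_i}_{i=1}^n be {0,1}-valued random variables that are mutually conditionally independent given σ(X, Y_1,…,Y_n) with P(B_i = 1 | σ(X, Y_1,…,Y_n)) = C(X, Y_i) for each i. Then (X, ((Y_i, B_i))_{i=1}^n) is exchangeable excluding 1. -/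
open MeasureTheory ProbabilityTheory Filter

noncomputable section

open CoevolveNet MeasureTheory ProbabilityTheory Filter

namespace ExchAux

open MeasureTheory ProbabilityTheory

variable {Ω 𝒳 𝒴 : Type*} [MeasurableSpace Ω] [MeasurableSpace 𝒳] [MeasurableSpace 𝒴]

/-- The σ-algebra generated by `X` and the `Y i`. -/
abbrev mXY {n : ℕ} (X : Ω → 𝒳) (Y : Fin n → Ω → 𝒴) : MeasurableSpace Ω :=
  MeasurableSpace.comap (fun ω => (X ω, fun i => Y i ω)) inferInstance

lemma integrable_of_bdd (P : Measure Ω) [IsProbabilityMeasure P] {f : Ω → ℝ}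
    (hf : AEStronglyMeasurable f P) {c : ℝ} (h : ∀ ω, |f ω| ≤ c) : Integrable f P :=
  (integrable_const c).mono' hf (Filter.Eventually.of_forall fun ω => by
    simpa [Real.norm_eq_abs] using h ω)

lemma abs_prod_le_one {ι : Type*} (s : Finset ι) (f : ι → ℝ) (h : ∀ j ∈ s, |f j| ≤ 1) :
    |∏ j ∈ s, f j| ≤ 1 := by
  rw [Finset.abs_prod]
  exact Finset.prod_le_one (fun j _ => abs_nonneg _) h

lemma condexp_prod_B
    (P : Measure Ω) [IsProbabilityMeasure P] {n : ℕ}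
    (X : Ω → 𝒳) (Y : Fin n → Ω → 𝒴) (B : Fin n → Ω → ℝ)
    (hX : Measurable X) (hY : ∀ i, Measurable (Y i))
    (C : 𝒳 → 𝒴 → ℝ)
    (hB01 : ∀ i ω, B i ω = 0 ∨ B i ω = 1)
    (hCI : CoevolveNet.iCondIndepGiven P
      (MeasurableSpace.comap (fun ω => (X ω, fun i => Y i ω)) inferInstance) B)
    (hBlaw : ∀ i, P[B i | MeasurableSpace.comap (fun ω => (X ω, fun i => Y i ω)) inferInstance]
        =ᵐ[P] fun ω => C (X ω) (Y i ω))
    (T : Finset (Fin n)) :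
    P[(fun ω => ∏ j ∈ T, B j ω) | mXY X Y]
      =ᵐ[P] fun ω => ∏ j ∈ T, C (X ω) (Y j ω) := by
  classical
  have hm : mXY X Y ≤ ‹MeasurableSpace Ω› :=
    (hX.prodMk (measurable_pi_lambda _ hY)).comap_le
  set f : Fin n → ℝ → ℝ :=
    fun j x => if j ∈ T then Set.indicator {(1 : ℝ)} (fun _ => 1) x else 1 with hf_def
  have hfm : ∀ j, Measurable (f j) := by
    intro j
    by_cases hj : j ∈ T <;> simp only [hf_def, hj, if_true, if_false]
    · exact measurable_const.indicator (measurableSet_singleton 1)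
    · exact measurable_const
  have hfb : ∀ j, CoevolveNet.IsBdd (f j) := by
    intro j
    refine ⟨1, fun x => ?_⟩
    by_cases hj : j ∈ T
    · simp only [hf_def, hj, if_true, Set.indicator_apply]
      split_ifs <;> norm_num
    · simp only [hf_def, hj, if_false]
      norm_num
  have hfB : ∀ j ω, f j (B j ω) = if j ∈ T then B j ω else 1 := by
    intro j ω
    by_cases hj : j ∈ T
    · rcases hB01 j ω with h | h <;> simp [hf_def, hj, h, Set.indicator_apply]
    · simp [hf_def, hj]
  have hmain := hCI f hfm hfb
  have hL : (fun ω => ∏ i, f i (B i ω)) = fun ω => ∏ j ∈ T, B j ω := by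
    funext ω
    rw [show (∏ i, f i (B i ω)) = ∏ i, (if i ∈ T then B i ω else 1) from
      Finset.prod_congr rfl fun i _ => hfB i ω]
    rw [Finset.prod_ite_mem, Finset.univ_inter]
  rw [hL] at hmain
  refine hmain.trans ?_
  have hRj : ∀ j : Fin n, (P[(fun ω' => f j (B j ω')) | mXY X Y])
      =ᵐ[P] fun ω => if j ∈ T then C (X ω) (Y j ω) else 1 := by
    intro j
    by_cases hj : j ∈ T
    · have hfn : (fun ω' => f j (B j ω')) = B j :=
        funext fun ω => by rw [hfB]; simp [hj]
      rw [hfn]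
      refine (hBlaw j).trans ?_
      exact Filter.Eventually.of_forall fun ω => by simp [hj]
    · have hfn : (fun ω' => f j (B j ω')) = fun _ => (1 : ℝ) :=
        funext fun ω => by rw [hfB]; simp [hj]
      rw [hfn, condExp_const hm]
      exact Filter.Eventually.of_forall fun ω => by simp [hj]
  have hall : ∀ᵐ ω ∂P, ∀ j : Fin n,
      (P[(fun ω' => f j (B j ω')) | mXY X Y]) ω = if j ∈ T then C (X ω) (Y j ω) else 1 :=
    ae_all_iff.mpr hRj
  filter_upwards [hall] with ω hω
  rw [Finset.prod_congr rfl fun j _ => hω j, Finset.prod_ite_mem, Finset.univ_inter]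

lemma key_integral
    (P : Measure Ω) [IsProbabilityMeasure P] {n : ℕ}
    (X : Ω → 𝒳) (Y : Fin n → Ω → 𝒴) (B : Fin n → Ω → ℝ)
    (hX : Measurable X) (hY : ∀ i, Measurable (Y i)) (hB : ∀ i, Measurable (B i))
    (C : 𝒳 → 𝒴 → ℝ) (hC : Measurable fun p : 𝒳 × 𝒴 => C p.1 p.2)
    (hC01 : ∀ x y, C x y ∈ Set.Icc (0 : ℝ) 1)
    (hB01 : ∀ i ω, B i ω = 0 ∨ B i ω = 1)
    (hCI : CoevolveNet.iCondIndepGiven P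
      (MeasurableSpace.comap (fun ω => (X ω, fun i => Y i ω)) inferInstance) B)
    (hBlaw : ∀ i, P[B i | MeasurableSpace.comap (fun ω => (X ω, fun i => Y i ω)) inferInstance]
        =ᵐ[P] fun ω => C (X ω) (Y i ω))
    (a b : Fin n → 𝒴 → ℝ)
    (ha : ∀ j, Measurable (a j)) (hb : ∀ j, Measurable (b j))
    (ha01 : ∀ j y, a j y ∈ Set.Icc (0 : ℝ) 1) (hb01 : ∀ j y, b j y ∈ Set.Icc (0 : ℝ) 1)
    (A : Set 𝒳) (hA : MeasurableSet A) :
    ∫ ω, A.indicator (fun _ => (1 : ℝ)) (X ω)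
        * ∏ j, (B j ω * a j (Y j ω) + (1 - B j ω) * b j (Y j ω)) ∂P
      = ∫ ω, A.indicator (fun _ => (1 : ℝ)) (X ω)
        * ∏ j, (C (X ω) (Y j ω) * a j (Y j ω)
            + (1 - C (X ω) (Y j ω)) * b j (Y j ω)) ∂P := by
  classical
  have hXY : Measurable (fun ω => (X ω, fun i => Y i ω)) :=
    hX.prodMk (measurable_pi_lambda _ hY)
  have hm : mXY X Y ≤ ‹MeasurableSpace Ω› := hXY.comap_le
  set W : Finset (Fin n) → Ω → ℝ := fun T ω =>
    A.indicator (fun _ => (1 : ℝ)) (X ω) *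
      ((∏ j ∈ T, (a j (Y j ω) - b j (Y j ω))) * ∏ j ∈ Finset.univ \ T, b j (Y j ω)) with hW_def
  -- simple bounds
  have hind01 : ∀ x, |A.indicator (fun _ => (1 : ℝ)) x| ≤ 1 := by
    intro x; by_cases hx : x ∈ A <;> simp [Set.indicator_apply, hx]
  have habs_ab : ∀ j y, |a j y - b j y| ≤ 1 := by
    intro j y
    rcases ha01 j y with ⟨h1, h2⟩; rcases hb01 j y with ⟨h3, h4⟩
    rw [abs_le]; constructor <;> linarith
  have habs_b : ∀ j y, |b j y| ≤ 1 := by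
    intro j y; rcases hb01 j y with ⟨h3, h4⟩; rw [abs_le]; constructor <;> linarith
  have habs_B : ∀ j ω, |B j ω| ≤ 1 := by
    intro j ω; rcases hB01 j ω with h | h <;> simp [h]
  have habs_C : ∀ x y, |C x y| ≤ 1 := by
    intro x y; rcases hC01 x y with ⟨h1, h2⟩; rw [abs_le]; constructor <;> linarith
  have hW1 : ∀ T ω, |W T ω| ≤ 1 := by
    intro T ω
    rw [hW_def]
    simp only [abs_mul]
    have h1 := hind01 (X ω)
    have h2 := abs_prod_le_one T (fun j => a j (Y j ω) - b j (Y j ω))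
      (fun j _ => habs_ab j (Y j ω))
    have h3 := abs_prod_le_one (Finset.univ \ T) (fun j => b j (Y j ω))
      (fun j _ => habs_b j (Y j ω))
    have h4 : (0:ℝ) ≤ |∏ j ∈ T, (a j (Y j ω) - b j (Y j ω))| := abs_nonneg _
    have h5 : (0:ℝ) ≤ |∏ j ∈ Finset.univ \ T, b j (Y j ω)| := abs_nonneg _
    calc |A.indicator (fun _ => (1:ℝ)) (X ω)| *
          (|∏ j ∈ T, (a j (Y j ω) - b j (Y j ω))| * |∏ j ∈ Finset.univ \ T, b j (Y j ω)|)
        ≤ 1 * (1 * 1) := by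
          apply mul_le_mul h1 (mul_le_mul h2 h3 h5 (by norm_num)) (by positivity) (by norm_num)
      _ = 1 := by norm_num
  -- measurability
  have hWm : ∀ T, Measurable (W T) := by
    intro T
    exact ((measurable_const.indicator hA).comp hX).mul
      ((Finset.measurable_prod _ fun j _ => ((ha j).comp (hY j)).sub ((hb j).comp (hY j))).mul
        (Finset.measurable_prod _ fun j _ => (hb j).comp (hY j)))
  have hWsm : ∀ T, StronglyMeasurable[mXY X Y] (W T) := by
    intro T
    have hw : Measurable (fun p : 𝒳 × (Fin n → 𝒴) =>
        A.indicator (fun _ => (1 : ℝ)) p.1 *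
          ((∏ j ∈ T, (a j (p.2 j) - b j (p.2 j))) * ∏ j ∈ Finset.univ \ T, b j (p.2 j))) := by
      exact ((measurable_const.indicator hA).comp measurable_fst).mul
        ((Finset.measurable_prod _ fun j _ =>
            ((ha j).comp ((measurable_pi_apply j).comp measurable_snd)).sub
              ((hb j).comp ((measurable_pi_apply j).comp measurable_snd))).mul
          (Finset.measurable_prod _ fun j _ =>
            (hb j).comp ((measurable_pi_apply j).comp measurable_snd)))
    have hmeas : Measurable[mXY X Y] (W T) := hw.comp (Measurable.of_comap_le le_rfl)
    exact hmeas.stronglyMeasurable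
  have hBTm : ∀ T : Finset (Fin n), Measurable (fun ω => ∏ j ∈ T, B j ω) :=
    fun T => Finset.measurable_prod _ fun j _ => hB j
  have hCTm : ∀ T : Finset (Fin n), Measurable (fun ω => ∏ j ∈ T, C (X ω) (Y j ω)) :=
    fun T => Finset.measurable_prod _ fun j _ => hC.comp ((hX).prodMk (hY j))
  -- integrability
  have hintWB : ∀ T : Finset (Fin n), Integrable (fun ω => W T ω * ∏ j ∈ T, B j ω) P := by
    intro T
    refine integrable_of_bdd P ((hWm T).mul (hBTm T)).aestronglyMeasurable (c := 1) fun ω => ?_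
    rw [abs_mul]
    exact mul_le_one₀ (hW1 T ω) (abs_nonneg _)
      (abs_prod_le_one T _ fun j _ => habs_B j ω)
  have hintWC : ∀ T : Finset (Fin n),
      Integrable (fun ω => W T ω * ∏ j ∈ T, C (X ω) (Y j ω)) P := by
    intro T
    refine integrable_of_bdd P ((hWm T).mul (hCTm T)).aestronglyMeasurable (c := 1) fun ω => ?_
    rw [abs_mul]
    exact mul_le_one₀ (hW1 T ω) (abs_nonneg _)
      (abs_prod_le_one T _ fun j _ => habs_C (X ω) (Y j ω))
  have hintB : ∀ T : Finset (Fin n), Integrable (fun ω => ∏ j ∈ T, B j ω) P := by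
    intro T
    exact integrable_of_bdd P (hBTm T).aestronglyMeasurable (c := 1)
      fun ω => abs_prod_le_one T _ fun j _ => habs_B j ω
  -- expansion identities
  have hexpand : ∀ ω, A.indicator (fun _ => (1 : ℝ)) (X ω)
      * ∏ j, (B j ω * a j (Y j ω) + (1 - B j ω) * b j (Y j ω))
      = ∑ T ∈ Finset.univ.powerset, W T ω * ∏ j ∈ T, B j ω := by
    intro ω
    have h1 : ∀ j : Fin n, B j ω * a j (Y j ω) + (1 - B j ω) * b j (Y j ω)
        = B j ω * (a j (Y j ω) - b j (Y j ω)) + b j (Y j ω) := fun j => by ring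
    rw [Finset.prod_congr rfl fun j _ => h1 j, Finset.prod_add, Finset.mul_sum]
    refine Finset.sum_congr rfl fun T _ => ?_
    rw [Finset.prod_mul_distrib, hW_def]
    ring
  have hexpand' : ∀ ω, A.indicator (fun _ => (1 : ℝ)) (X ω)
      * ∏ j, (C (X ω) (Y j ω) * a j (Y j ω) + (1 - C (X ω) (Y j ω)) * b j (Y j ω))
      = ∑ T ∈ Finset.univ.powerset, W T ω * ∏ j ∈ T, C (X ω) (Y j ω) := by
    intro ω
    have h1 : ∀ j : Fin n, C (X ω) (Y j ω) * a j (Y j ω)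
          + (1 - C (X ω) (Y j ω)) * b j (Y j ω)
        = C (X ω) (Y j ω) * (a j (Y j ω) - b j (Y j ω)) + b j (Y j ω) := fun j => by ring
    rw [Finset.prod_congr rfl fun j _ => h1 j, Finset.prod_add, Finset.mul_sum]
    refine Finset.sum_congr rfl fun T _ => ?_
    rw [Finset.prod_mul_distrib, hW_def]
    ring
  -- the core conditional-expectation step
  have hcore : ∀ T ∈ Finset.univ.powerset,
      ∫ ω, W T ω * ∏ j ∈ T, B j ω ∂P = ∫ ω, W T ω * ∏ j ∈ T, C (X ω) (Y j ω) ∂P := by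
    intro T _
    have hg : Integrable (fun ω => ∏ j ∈ T, B j ω) P := hintB T
    have hfg : Integrable (W T * fun ω => ∏ j ∈ T, B j ω) P := hintWB T
    have hmul := condExp_mul_of_stronglyMeasurable_left (μ := P) (hWsm T) hfg hg
    have hprodB := condexp_prod_B P X Y B hX hY C hB01 hCI hBlaw T
    have h1 : ∫ ω, W T ω * ∏ j ∈ T, B j ω ∂P
        = ∫ ω, (P[(W T * fun ω' => ∏ j ∈ T, B j ω') | mXY X Y]) ω ∂P :=
      (integral_condExp hm).symm
    rw [h1]
    refine integral_congr_ae ?_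
    filter_upwards [hmul, hprodB] with ω h2 h3
    rw [h2]
    simp only [Pi.mul_apply]
    rw [h3]
  calc ∫ ω, A.indicator (fun _ => (1 : ℝ)) (X ω)
        * ∏ j, (B j ω * a j (Y j ω) + (1 - B j ω) * b j (Y j ω)) ∂P
      = ∫ ω, ∑ T ∈ Finset.univ.powerset, W T ω * ∏ j ∈ T, B j ω ∂P :=
        integral_congr_ae (Filter.Eventually.of_forall hexpand)
    _ = ∑ T ∈ Finset.univ.powerset, ∫ ω, W T ω * ∏ j ∈ T, B j ω ∂P :=
        integral_finset_sum _ fun T _ => hintWB T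
    _ = ∑ T ∈ Finset.univ.powerset, ∫ ω, W T ω * ∏ j ∈ T, C (X ω) (Y j ω) ∂P :=
        Finset.sum_congr rfl hcore
    _ = ∫ ω, ∑ T ∈ Finset.univ.powerset, W T ω * ∏ j ∈ T, C (X ω) (Y j ω) ∂P :=
        (integral_finset_sum _ fun T _ => hintWC T).symm
    _ = _ := integral_congr_ae (Filter.Eventually.of_forall fun ω => (hexpand' ω).symm)

end ExchAux


/-- **Exchangeability excluding the first index is preserved by adding conditionally
independent Bernoulli marks** (Lemma A.10).  If `(X,(Y_i))` is exchangeable excluding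
the first index, `C : 𝒳×𝒴 → [0,1]` is measurable, and the `{0,1}`-valued `B_i` are
mutually conditionally independent given `σ(X,Y₁,…,Y_n)` with
`P(B_i = 1 | σ(X,Y)) = C(X,Y_i)`, then `(X,((Y_i,B_i))_i)` is exchangeable excluding
the first index. -/
theorem exchExclZero_add_bernoulli
    {Ω 𝒳 𝒴 : Type*} [MeasurableSpace Ω]
    [TopologicalSpace 𝒳] [PolishSpace 𝒳] [MeasurableSpace 𝒳] [BorelSpace 𝒳]
    [TopologicalSpace 𝒴] [PolishSpace 𝒴] [MeasurableSpace 𝒴] [BorelSpace 𝒴]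
    (P : Measure Ω) [IsProbabilityMeasure P] (n : ℕ)
    (X : Ω → 𝒳) (Y : Fin n → Ω → 𝒴) (B : Fin n → Ω → ℝ)
    (hX : Measurable X) (hY : ∀ i, Measurable (Y i)) (hB : ∀ i, Measurable (B i))
    (C : 𝒳 → 𝒴 → ℝ) (hC : Measurable fun p : 𝒳 × 𝒴 => C p.1 p.2)
    (hC01 : ∀ x y, C x y ∈ Set.Icc (0 : ℝ) 1)
    (hexch : ExchExclZero P X Y)
    (hB01 : ∀ i ω, B i ω = 0 ∨ B i ω = 1)
    (hCI : iCondIndepGiven P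
      (MeasurableSpace.comap (fun ω => (X ω, fun i => Y i ω)) inferInstance) B)
    (hBlaw : ∀ i,
      P[B i | MeasurableSpace.comap (fun ω => (X ω, fun i => Y i ω)) inferInstance]
        =ᵐ[P] fun ω => C (X ω) (Y i ω)) :
    ExchExclZero P X (fun i ω => (Y i ω, B i ω)) := by
  classical
  intro σ hσ0
  have hYB : ∀ i, Measurable (fun ω => (Y i ω, B i ω)) := fun i => (hY i).prodMk (hB i)
  have hgσ : Measurable (fun ω => (X ω, fun i => (Y (σ i) ω, B (σ i) ω))) :=
    hX.prodMk (measurable_pi_lambda _ fun i => hYB (σ i))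
  have hg1 : Measurable (fun ω => (X ω, fun i => (Y i ω, B i ω))) :=
    hX.prodMk (measurable_pi_lambda _ fun i => hYB i)
  haveI := Measure.isProbabilityMeasure_map (μ := P) hgσ.aemeasurable
  haveI := Measure.isProbabilityMeasure_map (μ := P) hg1.aemeasurable
  have hspan : IsCountablySpanning
      (Set.pi Set.univ '' Set.pi Set.univ fun _ : Fin n => {s : Set (𝒴 × ℝ) | MeasurableSet s}) := by
    refine ⟨fun _ => Set.univ, fun _ => ⟨fun _ => Set.univ, ?_, ?_⟩, ?_⟩
    · intro i _
      simp
    · simp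
    · exact Set.iUnion_const _
  refine ext_of_generate_finite
    (Set.image2 (· ×ˢ ·) {s : Set 𝒳 | MeasurableSet s}
      (Set.pi Set.univ '' Set.pi Set.univ fun _ : Fin n => {s : Set (𝒴 × ℝ) | MeasurableSet s}))
    ?_ ?_ ?_ ?_
  · exact (generateFrom_eq_prod MeasurableSpace.generateFrom_measurableSet generateFrom_pi
      isCountablySpanning_measurableSet hspan).symm
  · exact MeasurableSpace.isPiSystem_measurableSet.prod isPiSystem_pi
  · intro s hs
    simp only [Set.mem_image2, Set.mem_image, Set.mem_setOf_eq] at hs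
    obtain ⟨A, hA, t, ⟨S, hS, rfl⟩, rfl⟩ := hs
    have hSi : ∀ i, MeasurableSet (S i) := fun i => hS i (Set.mem_univ i)
    -- notation
    set u : Fin n → 𝒴 → ℝ := fun i y => (S i).indicator (fun _ => (1 : ℝ)) (y, 1) with hu_def
    set v : Fin n → 𝒴 → ℝ := fun i y => (S i).indicator (fun _ => (1 : ℝ)) (y, 0) with hv_def
    set ψ : Fin n → 𝒳 → 𝒴 → ℝ :=
      fun i x y => C x y * u i y + (1 - C x y) * v i y with hψ_def
    have hu : ∀ i, Measurable (u i) := fun i =>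
      (measurable_const.indicator (hSi i)).comp (measurable_id.prodMk measurable_const)
    have hv : ∀ i, Measurable (v i) := fun i =>
      (measurable_const.indicator (hSi i)).comp (measurable_id.prodMk measurable_const)
    have hu01 : ∀ i y, u i y ∈ Set.Icc (0 : ℝ) 1 := by
      intro i y
      by_cases hy : ((y, (1:ℝ)) ∈ S i) <;> simp [hu_def, Set.indicator_apply, hy]
    have hv01 : ∀ i y, v i y ∈ Set.Icc (0 : ℝ) 1 := by
      intro i y
      by_cases hy : ((y, (0:ℝ)) ∈ S i) <;> simp [hv_def, Set.indicator_apply, hy]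
    have hψm : ∀ i, Measurable (fun p : 𝒳 × 𝒴 => ψ i p.1 p.2) := by
      intro i
      exact (hC.mul ((hu i).comp measurable_snd)).add
        ((measurable_const.sub hC).mul ((hv i).comp measurable_snd))
    set F : 𝒳 × (Fin n → 𝒴) → ℝ :=
      fun p => A.indicator (fun _ => (1 : ℝ)) p.1 * ∏ i, ψ i p.1 (p.2 i) with hF_def
    have hF : Measurable F := by
      exact ((measurable_const.indicator hA).comp measurable_fst).mul
        (Finset.measurable_prod _ fun i _ =>
          (hψm i).comp (measurable_fst.prodMk ((measurable_pi_apply i).comp measurable_snd)))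
    have hind : ∀ (i j : Fin n) ω, (S i).indicator (fun _ => (1 : ℝ)) (Y j ω, B j ω)
        = B j ω * u i (Y j ω) + (1 - B j ω) * v i (Y j ω) := by
      intro i j ω
      rcases hB01 j ω with h | h <;> rw [h] <;> simp [hu_def, hv_def]
    -- the main integral identity, valid for any permutation τ
    have main : ∀ τ : Equiv.Perm (Fin n),
        ∫ ω, A.indicator (fun _ => (1 : ℝ)) (X ω)
            * ∏ i, (S i).indicator (fun _ => (1 : ℝ)) (Y (τ i) ω, B (τ i) ω) ∂P
          = ∫ ω, F (X ω, fun i => Y (τ i) ω) ∂P := by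
      intro τ
      have step1 : ∀ ω, (∏ i, (S i).indicator (fun _ => (1 : ℝ)) (Y (τ i) ω, B (τ i) ω))
          = ∏ j, (B j ω * u (τ.symm j) (Y j ω) + (1 - B j ω) * v (τ.symm j) (Y j ω)) := by
        intro ω
        calc (∏ i, (S i).indicator (fun _ => (1 : ℝ)) (Y (τ i) ω, B (τ i) ω))
            = ∏ i, (B (τ i) ω * u (τ.symm (τ i)) (Y (τ i) ω)
                + (1 - B (τ i) ω) * v (τ.symm (τ i)) (Y (τ i) ω)) := by
              refine Finset.prod_congr rfl fun i _ => ?_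
              rw [Equiv.symm_apply_apply]
              exact hind i (τ i) ω
          _ = ∏ j, (B j ω * u (τ.symm j) (Y j ω) + (1 - B j ω) * v (τ.symm j) (Y j ω)) :=
              Equiv.prod_comp τ
                (fun j => B j ω * u (τ.symm j) (Y j ω) + (1 - B j ω) * v (τ.symm j) (Y j ω))
      have step3 : ∀ ω, (∏ j, ψ (τ.symm j) (X ω) (Y j ω)) = ∏ i, ψ i (X ω) (Y (τ i) ω) := by
        intro ω
        rw [← Equiv.prod_comp τ (fun j => ψ (τ.symm j) (X ω) (Y j ω))]
        exact Finset.prod_congr rfl fun i _ => by rw [Equiv.symm_apply_apply]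
      calc ∫ ω, A.indicator (fun _ => (1 : ℝ)) (X ω)
              * ∏ i, (S i).indicator (fun _ => (1 : ℝ)) (Y (τ i) ω, B (τ i) ω) ∂P
          = ∫ ω, A.indicator (fun _ => (1 : ℝ)) (X ω)
              * ∏ j, (B j ω * u (τ.symm j) (Y j ω)
                  + (1 - B j ω) * v (τ.symm j) (Y j ω)) ∂P := by
            refine integral_congr_ae (Filter.Eventually.of_forall fun ω => ?_)
            dsimp only
            rw [step1 ω]
        _ = ∫ ω, A.indicator (fun _ => (1 : ℝ)) (X ω)
              * ∏ j, (C (X ω) (Y j ω) * u (τ.symm j) (Y j ω)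
                  + (1 - C (X ω) (Y j ω)) * v (τ.symm j) (Y j ω)) ∂P :=
            ExchAux.key_integral P X Y B hX hY hB C hC hC01 hB01 hCI hBlaw
              (fun j => u (τ.symm j)) (fun j => v (τ.symm j))
              (fun j => hu (τ.symm j)) (fun j => hv (τ.symm j))
              (fun j y => hu01 (τ.symm j) y) (fun j y => hv01 (τ.symm j) y) A hA
        _ = ∫ ω, F (X ω, fun i => Y (τ i) ω) ∂P := by
            refine integral_congr_ae (Filter.Eventually.of_forall fun ω => ?_)
            show A.indicator (fun _ => (1 : ℝ)) (X ω) * ∏ j, ψ (τ.symm j) (X ω) (Y j ω)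
              = F (X ω, fun i => Y (τ i) ω)
            rw [step3 ω]
    -- exchangeability transfers the right-hand side
    have hYσ : Measurable (fun ω => (X ω, fun i => Y (σ i) ω)) :=
      hX.prodMk (measurable_pi_lambda _ fun i => hY (σ i))
    have hY1 : Measurable (fun ω => (X ω, fun i => Y i ω)) :=
      hX.prodMk (measurable_pi_lambda _ hY)
    have hmapint : ∫ ω, F (X ω, fun i => Y (σ i) ω) ∂P = ∫ ω, F (X ω, fun i => Y i ω) ∂P := by
      rw [← integral_map hYσ.aemeasurable hF.aestronglyMeasurable,
        ← integral_map hY1.aemeasurable hF.aestronglyMeasurable, hexch σ hσ0]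
    -- set-measure computation
    have hst : MeasurableSet (A ×ˢ Set.univ.pi S) := hA.prod (MeasurableSet.univ_pi hSi)
    rw [Measure.map_apply hgσ hst, Measure.map_apply hg1 hst]
    refine (ENNReal.toReal_eq_toReal_iff' (measure_ne_top _ _) (measure_ne_top _ _)).mp ?_
    change P.real _ = P.real _
    rw [← integral_indicator_one (hgσ hst), ← integral_indicator_one (hg1 hst)]
    have hprod_ind : ∀ (x : 𝒳) (z : Fin n → 𝒴 × ℝ),
        (A ×ˢ Set.univ.pi S).indicator (fun _ => (1 : ℝ)) (x, z)
          = A.indicator (fun _ => (1 : ℝ)) x * ∏ i, (S i).indicator (fun _ => (1 : ℝ)) (z i) := by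
      intro x z
      by_cases hx : x ∈ A
      · by_cases hz : ∀ i, z i ∈ S i
        · rw [Set.indicator_of_mem (Set.mem_prod.mpr ⟨hx, Set.mem_univ_pi.mpr hz⟩),
            Set.indicator_of_mem hx,
            Finset.prod_congr rfl fun i _ => Set.indicator_of_mem (hz i) (fun _ => (1 : ℝ))]
          simp
        · push_neg at hz
          obtain ⟨i, hi⟩ := hz
          rw [Set.indicator_of_notMem
            (fun hmem => hi (Set.mem_univ_pi.mp (Set.mem_prod.mp hmem).2 i)),
            Finset.prod_eq_zero (Finset.mem_univ i)
              (Set.indicator_of_notMem hi (fun _ => (1 : ℝ)))]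
          ring
      · rw [Set.indicator_of_notMem (fun hmem => hx (Set.mem_prod.mp hmem).1),
          Set.indicator_of_notMem hx]
        ring
    have hpre : ∀ (g : Ω → 𝒳 × (Fin n → 𝒴 × ℝ)) (ω : Ω),
        (g ⁻¹' (A ×ˢ Set.univ.pi S)).indicator (fun _ => (1 : ℝ)) ω
          = (A ×ˢ Set.univ.pi S).indicator (fun _ => (1 : ℝ)) (g ω) := by
      intro g ω
      by_cases h : g ω ∈ A ×ˢ Set.univ.pi S <;> simp [Set.indicator_apply, h]
    have lhs_eq : ∫ ω, ((fun ω => (X ω, fun i => (Y (σ i) ω, B (σ i) ω)))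
          ⁻¹' (A ×ˢ Set.univ.pi S)).indicator 1 ω ∂P
        = ∫ ω, A.indicator (fun _ => (1 : ℝ)) (X ω)
            * ∏ i, (S i).indicator (fun _ => (1 : ℝ)) (Y (σ i) ω, B (σ i) ω) ∂P := by
      refine integral_congr_ae (Filter.Eventually.of_forall fun ω => ?_)
      show ((fun ω => (X ω, fun i => (Y (σ i) ω, B (σ i) ω)))
          ⁻¹' (A ×ˢ Set.univ.pi S)).indicator (fun _ => (1 : ℝ)) ω = _
      rw [hpre, hprod_ind]
    have rhs_eq : ∫ ω, ((fun ω => (X ω, fun i => (Y i ω, B i ω)))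
          ⁻¹' (A ×ˢ Set.univ.pi S)).indicator 1 ω ∂P
        = ∫ ω, A.indicator (fun _ => (1 : ℝ)) (X ω)
            * ∏ i, (S i).indicator (fun _ => (1 : ℝ)) (Y i ω, B i ω) ∂P := by
      refine integral_congr_ae (Filter.Eventually.of_forall fun ω => ?_)
      show ((fun ω => (X ω, fun i => (Y i ω, B i ω)))
          ⁻¹' (A ×ˢ Set.univ.pi S)).indicator (fun _ => (1 : ℝ)) ω = _
      rw [hpre, hprod_ind]
    rw [lhs_eq, rhs_eq, main σ]
    have main1 := main 1
    simp only [Equiv.Perm.coe_one, id_eq] at main1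
    rw [main1, hmapint]
  · rw [Measure.map_apply hgσ MeasurableSet.univ, Measure.map_apply hg1 MeasurableSet.univ]
    simp
end
end
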